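/- (Key recursive step in the proof of the CHN identities.) For all integers j ≥ 2 and 1 ≤ k ≤ j−1 one has the matrix identity over the RTT-algebra: σ_k(T) · T^{⟨j−k⟩} = (k+1)_q · Tr_{(1…j−1)}(A^{(k+1)} R̂_{k+1} … R̂_{j−1} T₁ … T_j) + k_q · Tr_{(1…j−1)}(A^{(k)} R̂_k R̂_{k+1} … R̂_{j−1} T₁ … T_j). -/

import Mathlib

open Finset

/-- Operators on `V^{⊗ m}` where `V = F^N`, represented as matrices indexed by
multi-indices `Fin m → Fin N`. -/
abbrev TensM (R : Type*) (N m : ℕ) := Matrix (Fin m → Fin N) (Fin m → Fin N) R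

/-- Operators on `V ⊗ V`, i.e. `N² × N²` matrices. -/
abbrev RMat (R : Type*) (N : ℕ) := Matrix (Fin N × Fin N) (Fin N × Fin N) R

/-- The `q`-number `k_q = (q^k - q^{-k})/(q - q^{-1})`. -/
noncomputable def qnum {F : Type*} [Field F] (q : F) (k : ℕ) : F :=
  (q ^ k - q⁻¹ ^ k) / (q - q⁻¹)

/-- Place an `N × N` matrix on the tensor leg number `i` (0-based) of `V^{⊗ m}`,
acting as the identity on all other legs. -/
def place1 {R : Type*} [Zero R] {N m : ℕ} (i : ℕ) (M : Matrix (Fin N) (Fin N) R) :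
    TensM R N m :=
  Matrix.of fun a b =>
    if h : i < m then
      if ∀ t : Fin m, t.val ≠ i → a t = b t then M (a ⟨i, h⟩) (b ⟨i, h⟩) else 0
    else 0

/-- Place an operator on `V ⊗ V` on the (0-based) tensor legs `i, i+1` of `V^{⊗ m}`,
acting as the identity on all other legs.  (So the paper's `R̂_i`, `1`-based, is
`place2 (i-1)`.) -/
def place2 {R : Type*} [Zero R] {N m : ℕ} (i : ℕ) (M : RMat R N) :
    TensM R N m :=
  Matrix.of fun a b =>
    if h : i + 1 < m then
      if ∀ t : Fin m, t.val ≠ i → t.val ≠ i + 1 → a t = b t then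
        M (a ⟨i, by omega⟩, a ⟨i + 1, h⟩) (b ⟨i, by omega⟩, b ⟨i + 1, h⟩)
      else 0
    else 0

/-- Embed an operator on `V^{⊗ k}` into `V^{⊗ m}` (`k ≤ m`), acting on the first `k`
tensor legs and as the identity on the remaining legs. -/
def embed {R : Type*} [Zero R] {N : ℕ} (m : ℕ) {k : ℕ} (M : TensM R N k) :
    TensM R N m :=
  Matrix.of fun a b =>
    if h : k ≤ m then
      if ∀ t : Fin m, k ≤ t.val → a t = b t then
        M (fun s => a ⟨s.val, lt_of_lt_of_le s.isLt h⟩)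
          (fun s => b ⟨s.val, lt_of_lt_of_le s.isLt h⟩)
      else 0
    else 0

/-- The braid form of the Yang--Baxter equation `R̂₁ R̂₂ R̂₁ = R̂₂ R̂₁ R̂₂` on `V^{⊗3}`. -/
def YangBaxter {F : Type*} [Field F] {N : ℕ} (Rh : RMat F N) : Prop :=
  (place2 0 Rh : TensM F N 3) * place2 1 Rh * place2 0 Rh =
    place2 1 Rh * place2 0 Rh * place2 1 Rh

/-- The Hecke condition `R̂² = I + (q - q⁻¹) R̂`. -/
def Hecke {F : Type*} [Field F] {N : ℕ} (q : F) (Rh : RMat F N) : Prop :=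
  Rh * Rh = 1 + (q - q⁻¹) • Rh

/-- The `q`-antisymmetrizers `A^{(k)}`, defined inductively by `A^{(1)} = I` and
`A^{(k)} = (1/k_q) A^{(k-1)} (q^{k-1} - (k-1)_q R̂_{k-1}) A^{(k-1)}`. -/
noncomputable def antis {F : Type*} [Field F] {N : ℕ} (Rh : RMat F N) (q : F) :
    (k : ℕ) → TensM F N k
  | 0 => 1
  | 1 => 1
  | k + 2 =>
      (qnum q (k + 2))⁻¹ •
        (embed (k + 2) (antis Rh q (k + 1)) *
          (q ^ (k + 1) • (1 : TensM F N (k + 2)) - qnum q (k + 1) • place2 k Rh) *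
          embed (k + 2) (antis Rh q (k + 1)))

/-- The `q`-symmetrizers `S^{(k)}`, defined inductively by `S^{(1)} = I` and
`S^{(k)} = (1/k_q) S^{(k-1)} (q^{1-k} + (k-1)_q R̂_{k-1}) S^{(k-1)}`. -/
noncomputable def syms {F : Type*} [Field F] {N : ℕ} (Rh : RMat F N) (q : F) :
    (k : ℕ) → TensM F N k
  | 0 => 1
  | 1 => 1
  | k + 2 =>
      (qnum q (k + 2))⁻¹ •
        (embed (k + 2) (syms Rh q (k + 1)) *
          (q⁻¹ ^ (k + 1) • (1 : TensM F N (k + 2)) + qnum q (k + 1) • place2 k Rh) *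
          embed (k + 2) (syms Rh q (k + 1)))

/-- Partial trace over all tensor legs except the last one. -/
def trAllButLast {R : Type*} [AddCommMonoid R] {N : ℕ} :
    {m : ℕ} → TensM R N m → Matrix (Fin N) (Fin N) R
  | 0, _ => 0
  | m + 1, M => Matrix.of fun x y => ∑ a : Fin m → Fin N, M (Fin.snoc a x) (Fin.snoc a y)

/-- Partial trace over all tensor legs except the first one. -/
def trAllButFirst {R : Type*} [AddCommMonoid R] {N : ℕ} :
    {m : ℕ} → TensM R N m → Matrix (Fin N) (Fin N) R
  | 0, _ => 0
  | m + 1, M => Matrix.of fun x y => ∑ a : Fin m → Fin N, M (Fin.cons x a) (Fin.cons y a)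

/-- Extension of scalars `F → 𝒜` applied entrywise (scalar entries are central in `𝒜`). -/
def lift {F : Type*} [Field F] (𝒜 : Type*) [Ring 𝒜] [Algebra F 𝒜] {N m : ℕ}
    (M : TensM F N m) : TensM 𝒜 N m := M.map (algebraMap F 𝒜)

/-- The product `R̂_{i+1} R̂_{i+2} ⋯ R̂_{i+l}` (1-based paper numbering), i.e. the product of
copies of `R̂` placed at 0-based positions `i, i+1, …, i+l-1` of `V^{⊗ m}`. -/
noncomputable def rChainFrom {F : Type*} [Field F] {N : ℕ} (m : ℕ) (Rh : RMat F N)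
    (i : ℕ) : ℕ → TensM F N m
  | 0 => 1
  | l + 1 => rChainFrom m Rh i l * place2 (i + l) Rh

/-- The product `R̂₁ R̂₂ ⋯ R̂_l` (1-based paper numbering) on `V^{⊗ m}`. -/
noncomputable def rChain {F : Type*} [Field F] {N : ℕ} (m : ℕ) (Rh : RMat F N)
    (l : ℕ) : TensM F N m := rChainFrom m Rh 0 l

/-- The product `T₁ T₂ ⋯ T_k` of copies of the quantum matrix `T` on `V^{⊗ m}`. -/
def Tprod {𝒜 : Type*} [Ring 𝒜] {N : ℕ} (m : ℕ) (T : Matrix (Fin N) (Fin N) 𝒜) :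
    ℕ → TensM 𝒜 N m
  | 0 => 1
  | k + 1 => Tprod m T k * place1 k T

/-- The matrix `T₁T₂` on `V ⊗ V`, `(T₁T₂)^{ij}_{kl} = T^i_k T^j_l`. -/
def TT {𝒜 : Type*} [Mul 𝒜] {N : ℕ} (T : Matrix (Fin N) (Fin N) 𝒜) : RMat 𝒜 N :=
  Matrix.of fun p r => T p.1 r.1 * T p.2 r.2

/-- The RTT relation `R̂ T₁T₂ = T₁T₂ R̂` (entries of `R̂` are central scalars). -/
def RTTrel {F : Type*} [Field F] {N : ℕ} (𝒜 : Type*) [Ring 𝒜] [Algebra F 𝒜]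
    (Rh : RMat F N) (T : Matrix (Fin N) (Fin N) 𝒜) : Prop :=
  Rh.map (algebraMap F 𝒜) * TT T = TT T * Rh.map (algebraMap F 𝒜)

/-- The `k`-th underlined power `T^{⟨k⟩} = Tr_{(1…k-1)} (R̂₁ ⋯ R̂_{k-1} T₁ ⋯ T_k)`. -/
noncomputable def underPow {F : Type*} [Field F] (𝒜 : Type*) [Ring 𝒜] [Algebra F 𝒜]
    {N : ℕ} (Rh : RMat F N) (T : Matrix (Fin N) (Fin N) 𝒜) :
    ℕ → Matrix (Fin N) (Fin N) 𝒜
  | 0 => 1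
  | k + 1 => trAllButLast (lift 𝒜 (rChain (k + 1) Rh k) * Tprod (k + 1) T (k + 1))

/-- The `k`-th overlined power `T^{[k]} = Tr_{(2…k)} (R̂₁ ⋯ R̂_{k-1} T₁ ⋯ T_k)`. -/
noncomputable def overPow {F : Type*} [Field F] (𝒜 : Type*) [Ring 𝒜] [Algebra F 𝒜]
    {N : ℕ} (Rh : RMat F N) (T : Matrix (Fin N) (Fin N) 𝒜) :
    ℕ → Matrix (Fin N) (Fin N) 𝒜
  | 0 => 1
  | k + 1 => trAllButFirst (lift 𝒜 (rChain (k + 1) Rh k) * Tprod (k + 1) T (k + 1))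

/-- The `k`-th right wedge power `T^{∧k,r} = Tr_{(1…k-1)} (A^{(k)} T₁ ⋯ T_k)`. -/
noncomputable def wedgeR {F : Type*} [Field F] (𝒜 : Type*) [Ring 𝒜] [Algebra F 𝒜]
    {N : ℕ} (Rh : RMat F N) (q : F) (T : Matrix (Fin N) (Fin N) 𝒜) :
    ℕ → Matrix (Fin N) (Fin N) 𝒜
  | 0 => 1
  | k + 1 => trAllButLast (lift 𝒜 (antis Rh q (k + 1)) * Tprod (k + 1) T (k + 1))

/-- The `k`-th left wedge power `T^{∧k,l} = Tr_{(2…k)} (A^{(k)} T₁ ⋯ T_k)`. -/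
noncomputable def wedgeL {F : Type*} [Field F] (𝒜 : Type*) [Ring 𝒜] [Algebra F 𝒜]
    {N : ℕ} (Rh : RMat F N) (q : F) (T : Matrix (Fin N) (Fin N) 𝒜) :
    ℕ → Matrix (Fin N) (Fin N) 𝒜
  | 0 => 1
  | k + 1 => trAllButFirst (lift 𝒜 (antis Rh q (k + 1)) * Tprod (k + 1) T (k + 1))

/-- The `k`-th right symmetric power `T^{Sk,r} = Tr_{(1…k-1)} (S^{(k)} T₁ ⋯ T_k)`. -/
noncomputable def sPowR {F : Type*} [Field F] (𝒜 : Type*) [Ring 𝒜] [Algebra F 𝒜]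
    {N : ℕ} (Rh : RMat F N) (q : F) (T : Matrix (Fin N) (Fin N) 𝒜) :
    ℕ → Matrix (Fin N) (Fin N) 𝒜
  | 0 => 1
  | k + 1 => trAllButLast (lift 𝒜 (syms Rh q (k + 1)) * Tprod (k + 1) T (k + 1))

/-- The `k`-th left symmetric power `T^{Sk,l} = Tr_{(2…k)} (S^{(k)} T₁ ⋯ T_k)`. -/
noncomputable def sPowL {F : Type*} [Field F] (𝒜 : Type*) [Ring 𝒜] [Algebra F 𝒜]
    {N : ℕ} (Rh : RMat F N) (q : F) (T : Matrix (Fin N) (Fin N) 𝒜) :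
    ℕ → Matrix (Fin N) (Fin N) 𝒜
  | 0 => 1
  | k + 1 => trAllButFirst (lift 𝒜 (syms Rh q (k + 1)) * Tprod (k + 1) T (k + 1))

/-- The elementary symmetric functions `σ_k(T) = q^k Tr_{(1…k)} (A^{(k)} T₁ ⋯ T_k)`
(with `σ₀(T) = 1`). -/
noncomputable def sigmaT {F : Type*} [Field F] (𝒜 : Type*) [Ring 𝒜] [Algebra F 𝒜]
    {N : ℕ} (Rh : RMat F N) (q : F) (T : Matrix (Fin N) (Fin N) 𝒜) (k : ℕ) : 𝒜 :=
  q ^ k • Matrix.trace (lift 𝒜 (antis Rh q k) * Tprod k T k)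

/-- The complete symmetric functions `τ_k(T) = q^{-k} Tr_{(1…k)} (S^{(k)} T₁ ⋯ T_k)`
(with `τ₀(T) = 1`). -/
noncomputable def tauT {F : Type*} [Field F] (𝒜 : Type*) [Ring 𝒜] [Algebra F 𝒜]
    {N : ℕ} (Rh : RMat F N) (q : F) (T : Matrix (Fin N) (Fin N) 𝒜) (k : ℕ) : 𝒜 :=
  q⁻¹ ^ k • Matrix.trace (lift 𝒜 (syms Rh q k) * Tprod k T k)

/-- The `q`-power sums `s_k(T) = Tr_{(1…k)} (R̂₁ ⋯ R̂_{k-1} T₁ ⋯ T_k)` (with `s₀(T) = 1`). -/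
noncomputable def psum {F : Type*} [Field F] (𝒜 : Type*) [Ring 𝒜] [Algebra F 𝒜]
    {N : ℕ} (Rh : RMat F N) (T : Matrix (Fin N) (Fin N) 𝒜) (k : ℕ) : 𝒜 :=
  Matrix.trace (lift 𝒜 (rChain k Rh (k - 1)) * Tprod k T k)

/-- `D_ℓ = (n_q / q^n) Tr_{(1…n-1)} A^{(n)}`. -/
noncomputable def Dleft {F : Type*} [Field F] {N : ℕ} (Rh : RMat F N) (q : F) (n : ℕ) :
    Matrix (Fin N) (Fin N) F :=
  (qnum q n / q ^ n) • trAllButLast (antis Rh q n)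

/-- `D_r = (n_q / q^n) Tr_{(2…n)} A^{(n)}`. -/
noncomputable def Dright {F : Type*} [Field F] {N : ℕ} (Rh : RMat F N) (q : F) (n : ℕ) :
    Matrix (Fin N) (Fin N) F :=
  (qnum q n / q ^ n) • trAllButFirst (antis Rh q n)

/-- The Reflection equation `R̂ L₁ R̂ L₁ = L₁ R̂ L₁ R̂` on `V ⊗ V`. -/
def RErel {F : Type*} [Field F] {N : ℕ} (𝒜 : Type*) [Ring 𝒜] [Algebra F 𝒜]
    (Rh : RMat F N) (L : Matrix (Fin N) (Fin N) 𝒜) : Prop :=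
  lift 𝒜 (place2 0 Rh : TensM F N 2) * place1 0 L * lift 𝒜 (place2 0 Rh) * place1 0 L =
    place1 0 L * lift 𝒜 (place2 0 Rh) * place1 0 L * lift 𝒜 (place2 0 Rh)

/-- `L_{k̄}` (0-based: `Lbar … 0 = L₁`, `Lbar … k = R̂_k (Lbar … (k-1)) R̂_k⁻¹`). -/
noncomputable def Lbar {F : Type*} [Field F] (𝒜 : Type*) [Ring 𝒜] [Algebra F 𝒜]
    {N : ℕ} (Rh : RMat F N) (m : ℕ) (L : Matrix (Fin N) (Fin N) 𝒜) :
    ℕ → TensM 𝒜 N m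
  | 0 => place1 0 L
  | k + 1 => lift 𝒜 (place2 k Rh) * Lbar 𝒜 Rh m L k * lift 𝒜 (place2 k Rh⁻¹)

/-- The product `L_{1̄} L_{2̄} ⋯ L_{k̄}` on `V^{⊗ m}`. -/
noncomputable def LbarProd {F : Type*} [Field F] (𝒜 : Type*) [Ring 𝒜] [Algebra F 𝒜]
    {N : ℕ} (Rh : RMat F N) (m : ℕ) (L : Matrix (Fin N) (Fin N) 𝒜) :
    ℕ → TensM 𝒜 N m
  | 0 => 1
  | k + 1 => LbarProd 𝒜 Rh m L k * Lbar 𝒜 Rh m L k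

/-- Insertion of a copy of `D` on every tensor leg of `V^{⊗(m+1)}` except the first one. -/
def Dbig {F : Type*} [Field F] {N : ℕ} (D : Matrix (Fin N) (Fin N) F) (m : ℕ) :
    TensM F N (m + 1) :=
  Matrix.of fun a b =>
    (if a 0 = b 0 then (1 : F) else 0) * ∏ t : Fin m, D (a t.succ) (b t.succ)

/-- `L^{∧k} = Tr_{q (2…k)} (A^{(k)} L_{1̄} ⋯ L_{k̄})`, the `q`-trace over the legs `2…k`,
with a copy of `D` inserted in each traced leg. -/
noncomputable def LwedgeRE {F : Type*} [Field F] (𝒜 : Type*) [Ring 𝒜] [Algebra F 𝒜]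
    {N : ℕ} (Rh : RMat F N) (q : F) (D : Matrix (Fin N) (Fin N) F)
    (L : Matrix (Fin N) (Fin N) 𝒜) : ℕ → Matrix (Fin N) (Fin N) 𝒜
  | 0 => 1
  | k + 1 => trAllButFirst
      (lift 𝒜 (antis Rh q (k + 1)) * LbarProd 𝒜 Rh (k + 1) L (k + 1) * lift 𝒜 (Dbig D k))

/-- `L^{Sk} = Tr_{q (2…k)} (S^{(k)} L_{1̄} ⋯ L_{k̄})`. -/
noncomputable def LsymRE {F : Type*} [Field F] (𝒜 : Type*) [Ring 𝒜] [Algebra F 𝒜]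
    {N : ℕ} (Rh : RMat F N) (q : F) (D : Matrix (Fin N) (Fin N) F)
    (L : Matrix (Fin N) (Fin N) 𝒜) : ℕ → Matrix (Fin N) (Fin N) 𝒜
  | 0 => 1
  | k + 1 => trAllButFirst
      (lift 𝒜 (syms Rh q (k + 1)) * LbarProd 𝒜 Rh (k + 1) L (k + 1) * lift 𝒜 (Dbig D k))

/-- `σ_k(L) = q^k Tr_q (L^{∧k})`, with `σ₀(L) = 1`;  `Tr_q X = Tr (D_r X)`. -/
noncomputable def sigmaRE {F : Type*} [Field F] (𝒜 : Type*) [Ring 𝒜] [Algebra F 𝒜]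
    {N : ℕ} (Rh : RMat F N) (q : F) (D : Matrix (Fin N) (Fin N) F)
    (L : Matrix (Fin N) (Fin N) 𝒜) : ℕ → 𝒜
  | 0 => 1
  | k + 1 => q ^ (k + 1) •
      Matrix.trace (D.map (algebraMap F 𝒜) * LwedgeRE 𝒜 Rh q D L (k + 1))

/-- `τ_k(L) = q^{-k} Tr_q (L^{Sk})`, with `τ₀(L) = 1`. -/
noncomputable def tauRE {F : Type*} [Field F] (𝒜 : Type*) [Ring 𝒜] [Algebra F 𝒜]
    {N : ℕ} (Rh : RMat F N) (q : F) (D : Matrix (Fin N) (Fin N) F)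
    (L : Matrix (Fin N) (Fin N) 𝒜) : ℕ → 𝒜
  | 0 => 1
  | k + 1 => q⁻¹ ^ (k + 1) •
      Matrix.trace (D.map (algebraMap F 𝒜) * LsymRE 𝒜 Rh q D L (k + 1))

namespace CHN

section win

variable {N : ℕ} {R : Type*}

/-- Restriction of a multi-index to the window `[off, off+d)`. -/
def res (off d : ℕ) {m : ℕ} (a : Fin m → Fin N) (h : off + d ≤ m) : Fin d → Fin N :=
  fun s => a ⟨off + s.val, by omega⟩

/-- Patch a multi-index inside the window `[off, off+d)`. -/
def patch (off d : ℕ) {m : ℕ} (a : Fin m → Fin N) (g : Fin d → Fin N) : Fin m → Fin N :=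
  fun t => if h : off ≤ t.val ∧ t.val < off + d then g ⟨t.val - off, by omega⟩ else a t

lemma res_patch (off d : ℕ) {m : ℕ} (a : Fin m → Fin N) (g : Fin d → Fin N)
    (h : off + d ≤ m) : res off d (patch off d a g) h = g := by
  funext s
  have hs : s.val < d := s.isLt
  simp only [res, patch]
  rw [dif_pos (by constructor <;> omega)]
  congr 1
  ext
  simp

lemma patch_notin (off d : ℕ) {m : ℕ} (a : Fin m → Fin N) (g : Fin d → Fin N)
    (t : Fin m) (ht : t.val < off ∨ off + d ≤ t.val) : patch off d a g t = a t :=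
  dif_neg (by omega)

lemma patch_res (off d : ℕ) {m : ℕ} (a c : Fin m → Fin N) (h : off + d ≤ m)
    (hc : ∀ t : Fin m, (t.val < off ∨ off + d ≤ t.val) → c t = a t) :
    patch off d a (res off d c h) = c := by
  funext t
  by_cases ht : off ≤ t.val ∧ t.val < off + d
  · simp only [patch]
    rw [dif_pos ht]
    simp only [res]
    congr 1
    ext; simp; omega
  · rw [patch_notin off d a _ t (by omega)]
    exact (hc t (by omega)).symm

lemma sum_collapse {S : Type*} [AddCommMonoid S] (off d : ℕ) {m : ℕ} (h : off + d ≤ m)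
    (a : Fin m → Fin N) (G : (Fin m → Fin N) → S)
    (hG : ∀ c, ¬ (∀ t : Fin m, (t.val < off ∨ off + d ≤ t.val) → c t = a t) → G c = 0) :
    ∑ c : Fin m → Fin N, G c = ∑ g : Fin d → Fin N, G (patch off d a g) := by
  classical
  rw [← Finset.sum_filter_of_ne
    (p := fun c => ∀ t : Fin m, (t.val < off ∨ off + d ≤ t.val) → c t = a t)
    (fun c _ hc => by by_contra hmem; exact hc (hG c hmem))]
  refine Finset.sum_nbij' (fun c => res off d c h) (fun g => patch off d a g) ?_ ?_ ?_ ?_ ?_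
  · intro c _; exact Finset.mem_univ _
  · intro g _
    simp only [Finset.mem_filter, Finset.mem_univ, true_and]
    exact fun t ht => patch_notin off d a g t ht
  · intro c hc
    simp only [Finset.mem_filter, Finset.mem_univ, true_and] at hc
    exact patch_res off d a c h hc
  · intro g _; exact res_patch off d a g h
  · intro c hc
    simp only [Finset.mem_filter, Finset.mem_univ, true_and] at hc
    rw [patch_res off d a c h hc]

end win

end CHN
namespace CHN

section windef

variable {N : ℕ} {R : Type*}

/-- The window condition: `a` and `b` agree outside `[off, off+d)`. -/
def agreeOff (off d : ℕ) {m : ℕ} (a b : Fin m → Fin N) : Prop :=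
  ∀ t : Fin m, (t.val < off ∨ off + d ≤ t.val) → a t = b t

instance (off d : ℕ) {m : ℕ} (a b : Fin m → Fin N) : Decidable (agreeOff off d a b) := by
  unfold agreeOff; infer_instance

/-- Place an operator on `V^{⊗d}` on the legs `[off, off+d)` of `V^{⊗m}`. -/
def win [Zero R] (m off d : ℕ) (M : TensM R N d) : TensM R N m :=
  Matrix.of fun a b =>
    if h : off + d ≤ m then
      if agreeOff off d a b then M (res off d a h) (res off d b h) else 0
    else 0

lemma win_apply [Zero R] {m off d : ℕ} (M : TensM R N d) (h : off + d ≤ m)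
    (a b : Fin m → Fin N) :
    win m off d M a b =
      if agreeOff off d a b then M (res off d a h) (res off d b h) else 0 := by
  simp only [win, Matrix.of_apply, dif_pos h]

lemma agreeOff_patch_left [Zero R] {m off d : ℕ} (a : Fin m → Fin N) (g : Fin d → Fin N) :
    agreeOff off d a (patch off d a g) :=
  fun t ht => (patch_notin off d a g t ht).symm

lemma win_one [Zero R] [One R] {m off d : ℕ} (h : off + d ≤ m) :
    win m off d (1 : TensM R N d) = 1 := by
  ext a b
  rw [win_apply _ h]
  by_cases hc : agreeOff off d a b
  · rw [if_pos hc]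
    by_cases hab : a = b
    · subst hab
      rw [Matrix.one_apply_eq, Matrix.one_apply_eq]
    · have : res off d a h ≠ res off d b h := by
        intro he
        apply hab
        funext t
        by_cases ht : off ≤ t.val ∧ t.val < off + d
        · have := congrFun he ⟨t.val - off, by omega⟩
          simpa only [res, show off + (t.val - off) = t.val by omega, Fin.eta] using this
        · exact hc t (by omega)
      rw [Matrix.one_apply_ne this, Matrix.one_apply_ne hab]
  · rw [if_neg hc]
    have hab : a ≠ b := fun he => hc (by subst he; exact fun t _ => rfl)
    rw [Matrix.one_apply_ne hab]

lemma win_mul [NonUnitalNonAssocSemiring R] {m off d : ℕ} (h : off + d ≤ m)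
    (M M' : TensM R N d) :
    win m off d (M * M') = win m off d M * win m off d M' := by
  ext a b
  rw [Matrix.mul_apply]
  rw [sum_collapse off d h a _ (fun c hc => by
    rw [win_apply _ h, if_neg (fun hagree => hc (fun t ht => (hagree t ht).symm)), zero_mul])]
  have hval : ∀ g : Fin d → Fin N,
      win m off d M a (patch off d a g) * win m off d M' (patch off d a g) b
        = M (res off d a h) g * (if agreeOff off d a b then M' g (res off d b h) else 0) := by
    intro g
    rw [win_apply _ h, win_apply _ h, if_pos (agreeOff_patch_left (R := R) a g), res_patch]
    congr 1
    by_cases hab : agreeOff off d a b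
    · have hpb : agreeOff off d (patch off d a g) b := fun t ht => by
        rw [patch_notin off d a g t ht]; exact hab t ht
      rw [if_pos hpb, if_pos hab]
    · have hpb : ¬ agreeOff off d (patch off d a g) b := fun hpb => hab (fun t ht => by
        rw [← patch_notin off d a g t ht]; exact hpb t ht)
      rw [if_neg hpb, if_neg hab]
  rw [Finset.sum_congr rfl (fun g _ => hval g)]
  rw [win_apply _ h]
  by_cases hab : agreeOff off d a b
  · rw [if_pos hab, Matrix.mul_apply]
    exact (Finset.sum_congr rfl (fun g _ => by rw [if_pos hab])).symm
  · rw [if_neg hab]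
    exact (Finset.sum_eq_zero (fun g _ => by rw [if_neg hab, mul_zero])).symm

lemma res_res {m off d off2 d2 : ℕ} (a : Fin m → Fin N) (h : off + d ≤ m)
    (hs : off2 + d2 ≤ d) :
    res off2 d2 (res off d a h) hs = res (off + off2) d2 a (by omega) := by
  funext s
  simp only [res]
  congr 1
  ext
  simp
  omega

lemma win_win [Zero R] {m off d off2 d2 : ℕ} (h : off + d ≤ m) (hs : off2 + d2 ≤ d)
    (M : TensM R N d2) :
    win m off d (win d off2 d2 M) = win m (off + off2) d2 M := by
  have h2 : off + off2 + d2 ≤ m := by omega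
  ext a b
  rw [win_apply _ h, win_apply _ h2]
  by_cases hc : agreeOff (off + off2) d2 a b
  · have hc1 : agreeOff off d a b := fun t ht => hc t (by omega)
    have hcc : agreeOff off2 d2 (res off d a h) (res off d b h) := by
      intro s hsr
      have : off + s.val < off + off2 ∨ off + off2 + d2 ≤ off + s.val := by omega
      simpa only [res] using hc ⟨off + s.val, by omega⟩ this
    rw [if_pos hc1, win_apply _ hs, if_pos hcc, if_pos hc, res_res, res_res]
  · rw [if_neg hc]
    by_cases hc1 : agreeOff off d a b
    · have hcc : ¬ agreeOff off2 d2 (res off d a h) (res off d b h) := by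
        intro hc2
        apply hc
        intro t ht
        by_cases htin : off ≤ t.val ∧ t.val < off + d
        · have hmem : (⟨t.val - off, by omega⟩ : Fin d).val < off2 ∨
              off2 + d2 ≤ (⟨t.val - off, by omega⟩ : Fin d).val := by simp; omega
          have := hc2 ⟨t.val - off, by omega⟩ hmem
          simpa only [res, show off + (t.val - off) = t.val by omega, Fin.eta] using this
        · exact hc1 t (by omega)
      rw [if_pos hc1, win_apply _ hs, if_neg hcc]
    · rw [if_neg hc1]

lemma win_map [Zero R] {S : Type*} [Zero S] (f : R → S) (h0 : f 0 = 0)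
    {m off d : ℕ} (M : TensM R N d) :
    (win m off d M).map f = win m off d (M.map f) := by
  ext a b
  simp only [Matrix.map_apply, win, Matrix.of_apply]
  by_cases h : off + d ≤ m
  · rw [dif_pos h, dif_pos h]
    by_cases hc : agreeOff off d a b
    · rw [if_pos hc, if_pos hc]
    · rw [if_neg hc, if_neg hc, h0]
  · rw [dif_neg h, dif_neg h, h0]

lemma win_smul {S : Type*} [Zero R] [SMulZeroClass S R] (c : S)
    {m off d : ℕ} (M : TensM R N d) :
    win m off d (c • M) = c • win m off d M := by
  ext a b
  simp only [win, Matrix.of_apply, Matrix.smul_apply]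
  by_cases h : off + d ≤ m
  · rw [dif_pos h, dif_pos h]
    by_cases hc : agreeOff off d a b
    · rw [if_pos hc, if_pos hc]
    · rw [if_neg hc, if_neg hc, smul_zero]
  · rw [dif_neg h, dif_neg h, smul_zero]

lemma win_add [AddZeroClass R] {m off d : ℕ} (M M' : TensM R N d) :
    win m off d (M + M') = win m off d M + win m off d M' := by
  ext a b
  simp only [win, Matrix.of_apply, Matrix.add_apply]
  by_cases h : off + d ≤ m
  · rw [dif_pos h, dif_pos h, dif_pos h]
    by_cases hc : agreeOff off d a b
    · rw [if_pos hc, if_pos hc, if_pos hc]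
    · rw [if_neg hc, if_neg hc, if_neg hc, add_zero]
  · rw [dif_neg h, dif_neg h, dif_neg h, add_zero]

lemma win_sub [SubtractionMonoid R] {m off d : ℕ} (M M' : TensM R N d) :
    win m off d (M - M') = win m off d M - win m off d M' := by
  ext a b
  simp only [win, Matrix.of_apply, Matrix.sub_apply]
  by_cases h : off + d ≤ m
  · rw [dif_pos h, dif_pos h, dif_pos h]
    by_cases hc : agreeOff off d a b
    · rw [if_pos hc, if_pos hc, if_pos hc]
    · rw [if_neg hc, if_neg hc, if_neg hc, sub_zero]
  · rw [dif_neg h, dif_neg h, dif_neg h, sub_zero]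

end windef

end CHN
namespace CHN

section windisj

variable {N : ℕ} {R : Type*}

/-- `a` and `b` agree outside the union of two windows. -/
def agreeOff2 (off d off' d' : ℕ) {m : ℕ} (a b : Fin m → Fin N) : Prop :=
  ∀ t : Fin m, ((t.val < off ∨ off + d ≤ t.val) ∧ (t.val < off' ∨ off' + d' ≤ t.val)) →
    a t = b t

instance (off d off' d' : ℕ) {m : ℕ} (a b : Fin m → Fin N) :
    Decidable (agreeOff2 off d off' d' a b) := by
  unfold agreeOff2; infer_instance

lemma patch_in (off d : ℕ) {m : ℕ} (a : Fin m → Fin N) (g : Fin d → Fin N) (t : Fin m)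
    (h1 : off ≤ t.val) (h2 : t.val < off + d) :
    patch off d a g t = g ⟨t.val - off, by omega⟩ := dif_pos ⟨h1, h2⟩

lemma res_patch_right {m off d off' d' : ℕ} (hd : off + d ≤ off') (h' : off' + d' ≤ m)
    (a : Fin m → Fin N) (g : Fin d → Fin N) :
    res off' d' (patch off d a g) h' = res off' d' a h' := by
  funext s
  exact patch_notin off d a g _ (Or.inr (by simp only []; omega))

lemma res_patch_left {m off d off' d' : ℕ} (hd : off + d ≤ off') (h : off + d ≤ m)
    (h' : off' + d' ≤ m) (a : Fin m → Fin N) (g' : Fin d' → Fin N) :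
    res off d (patch off' d' a g') h = res off d a h := by
  funext s
  exact patch_notin off' d' a g' _ (Or.inl (by simp only []; omega))

lemma win_mul_win_left [NonUnitalNonAssocSemiring R] {m off d off' d' : ℕ}
    (hd : off + d ≤ off') (h' : off' + d' ≤ m) (M : TensM R N d) (M' : TensM R N d') :
    win m off d M * win m off' d' M' = Matrix.of fun a b =>
      if agreeOff2 off d off' d' a b then
        M (res off d a (by omega)) (res off d b (by omega)) *
          M' (res off' d' a h') (res off' d' b h') else 0 := by
  have h : off + d ≤ m := by omega
  ext a b
  rw [Matrix.mul_apply]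
  rw [sum_collapse off d h a _ (fun c hc => by
    rw [win_apply _ h, if_neg (fun hagree => hc (fun t ht => (hagree t ht).symm)), zero_mul])]
  have hval : ∀ g : Fin d → Fin N,
      win m off d M a (patch off d a g) * win m off' d' M' (patch off d a g) b =
        M (res off d a h) g *
          (if agreeOff off' d' (patch off d a g) b then
            M' (res off' d' a h') (res off' d' b h') else 0) := by
    intro g
    rw [win_apply _ h, win_apply _ h', if_pos (agreeOff_patch_left (R := R) a g), res_patch,
      res_patch_right hd h']
  rw [Finset.sum_congr rfl (fun g _ => hval g), Matrix.of_apply]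
  by_cases hab : agreeOff2 off d off' d' a b
  · rw [if_pos hab]
    rw [Finset.sum_eq_single (res off d b h)]
    · have hC : agreeOff off' d' (patch off d a (res off d b h)) b := by
        intro t ht
        by_cases htin : off ≤ t.val ∧ t.val < off + d
        · rw [patch_in off d a _ t htin.1 htin.2]
          simp only [res, show off + (t.val - off) = t.val by omega, Fin.eta]
        · rw [patch_notin off d a _ t (by omega)]
          exact hab t ⟨by omega, ht⟩
      rw [if_pos hC]
    · intro g _ hg
      have hC : ¬ agreeOff off' d' (patch off d a g) b := by
        intro hC
        apply hg
        funext s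
        have hs : s.val < d := s.isLt
        have := hC ⟨off + s.val, by omega⟩ (Or.inl (by simp only []; omega))
        rw [patch_in off d a g _ (by simp only []; omega) (by simp only []; omega)] at this
        simpa only [res, show off + s.val - off = s.val by omega, Fin.eta] using this
      rw [if_neg hC, mul_zero]
    · intro habs
      exact absurd (Finset.mem_univ _) habs
  · rw [if_neg hab]
    refine Finset.sum_eq_zero (fun g _ => ?_)
    have hC : ¬ agreeOff off' d' (patch off d a g) b := by
      intro hC
      apply hab
      intro t ht
      have := hC t ht.2
      rwa [patch_notin off d a g t ht.1] at this
    rw [if_neg hC, mul_zero]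

lemma win_mul_win_right [NonUnitalNonAssocSemiring R] {m off d off' d' : ℕ}
    (hd : off + d ≤ off') (h' : off' + d' ≤ m) (M : TensM R N d) (M' : TensM R N d') :
    win m off' d' M' * win m off d M = Matrix.of fun a b =>
      if agreeOff2 off d off' d' a b then
        M' (res off' d' a h') (res off' d' b h') *
          M (res off d a (by omega)) (res off d b (by omega)) else 0 := by
  have h : off + d ≤ m := by omega
  ext a b
  rw [Matrix.mul_apply]
  rw [sum_collapse off' d' h' a _ (fun c hc => by
    rw [win_apply _ h', if_neg (fun hagree => hc (fun t ht => (hagree t ht).symm)), zero_mul])]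
  have hval : ∀ g : Fin d' → Fin N,
      win m off' d' M' a (patch off' d' a g) * win m off d M (patch off' d' a g) b =
        M' (res off' d' a h') g *
          (if agreeOff off d (patch off' d' a g) b then
            M (res off d a h) (res off d b h) else 0) := by
    intro g
    rw [win_apply _ h', win_apply _ h, if_pos (agreeOff_patch_left (R := R) a g), res_patch,
      res_patch_left hd h h']
  rw [Finset.sum_congr rfl (fun g _ => hval g), Matrix.of_apply]
  by_cases hab : agreeOff2 off d off' d' a b
  · rw [if_pos hab]
    rw [Finset.sum_eq_single (res off' d' b h')]
    · have hC : agreeOff off d (patch off' d' a (res off' d' b h')) b := by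
        intro t ht
        by_cases htin : off' ≤ t.val ∧ t.val < off' + d'
        · rw [patch_in off' d' a _ t htin.1 htin.2]
          simp only [res, show off' + (t.val - off') = t.val by omega, Fin.eta]
        · rw [patch_notin off' d' a _ t (by omega)]
          exact hab t ⟨ht, by omega⟩
      rw [if_pos hC]
    · intro g _ hg
      have hC : ¬ agreeOff off d (patch off' d' a g) b := by
        intro hC
        apply hg
        funext s
        have hs : s.val < d' := s.isLt
        have := hC ⟨off' + s.val, by omega⟩ (Or.inr (by simp only []; omega))
        rw [patch_in off' d' a g _ (by simp only []; omega) (by simp only []; omega)] at this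
        simpa only [res, show off' + s.val - off' = s.val by omega, Fin.eta] using this
      rw [if_neg hC, mul_zero]
    · intro habs
      exact absurd (Finset.mem_univ _) habs
  · rw [if_neg hab]
    refine Finset.sum_eq_zero (fun g _ => ?_)
    have hC : ¬ agreeOff off d (patch off' d' a g) b := by
      intro hC
      apply hab
      intro t ht
      have := hC t ht.1
      rwa [patch_notin off' d' a g t ht.2] at this
    rw [if_neg hC, mul_zero]

lemma win_comm [NonUnitalNonAssocSemiring R] {m off d off' d' : ℕ}
    (hd : off + d ≤ off') (h' : off' + d' ≤ m) (M : TensM R N d) (M' : TensM R N d')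
    (hcomm : ∀ p r u v, M p r * M' u v = M' u v * M p r) :
    win m off d M * win m off' d' M' = win m off' d' M' * win m off d M := by
  rw [win_mul_win_left hd h' M M', win_mul_win_right hd h' M M']
  ext a b
  simp only [Matrix.of_apply]
  by_cases hab : agreeOff2 off d off' d' a b
  · rw [if_pos hab, if_pos hab, hcomm]
  · rw [if_neg hab, if_neg hab]

end windisj

end CHN
namespace CHN

section ident

variable {N : ℕ} {R : Type*}

/-- An `N × N` matrix as an operator on `V^{⊗1}`. -/
def pl1 [Zero R] (M : Matrix (Fin N) (Fin N) R) : TensM R N 1 :=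
  Matrix.of fun a b => M (a 0) (b 0)

/-- An operator on `V ⊗ V` as an operator on `V^{⊗2}`. -/
def pl2 [Zero R] (M : RMat R N) : TensM R N 2 :=
  Matrix.of fun a b => M (a 0, a 1) (b 0, b 1)

lemma place1_eq_win [Zero R] {m i : ℕ} (M : Matrix (Fin N) (Fin N) R) :
    (place1 i M : TensM R N m) = win m i 1 (pl1 M) := by
  ext a b
  simp only [place1, win, Matrix.of_apply]
  by_cases h : i + 1 ≤ m
  · rw [dif_pos (show i < m by omega), dif_pos h]
    by_cases hc : agreeOff i 1 a b
    · rw [if_pos (fun t ht => hc t (by omega)), if_pos hc]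
      rfl
    · rw [if_neg (fun hold => hc (fun t ht => hold t (by omega))), if_neg hc]
  · rw [dif_neg (show ¬ i < m by omega), dif_neg h]

lemma place2_eq_win [Zero R] {m i : ℕ} (M : RMat R N) :
    (place2 i M : TensM R N m) = win m i 2 (pl2 M) := by
  ext a b
  simp only [place2, win, Matrix.of_apply]
  by_cases h : i + 2 ≤ m
  · rw [dif_pos (show i + 1 < m by omega), dif_pos h]
    by_cases hc : agreeOff i 2 a b
    · rw [if_pos (fun t ht1 ht2 => hc t (by omega)), if_pos hc]
      rfl
    · rw [if_neg (fun hold => hc (fun t ht => hold t (by omega) (by omega))), if_neg hc]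
  · rw [dif_neg (show ¬ i + 1 < m by omega), dif_neg h]

lemma embed_eq_win [Zero R] {m k : ℕ} (M : TensM R N k) :
    (embed m M : TensM R N m) = win m 0 k M := by
  ext a b
  simp only [embed, win, Matrix.of_apply]
  by_cases h : k ≤ m
  · rw [dif_pos h, dif_pos (show 0 + k ≤ m by omega)]
    have hra : res 0 k a (by omega) = fun s : Fin k => a ⟨s.val, by omega⟩ :=
      funext fun s => congrArg a (Fin.ext (Nat.zero_add _))
    have hrb : res 0 k b (by omega) = fun s : Fin k => b ⟨s.val, by omega⟩ :=
      funext fun s => congrArg b (Fin.ext (Nat.zero_add _))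
    by_cases hc : agreeOff 0 k a b
    · rw [if_pos (fun t ht => hc t (by omega)), if_pos hc, hra, hrb]
    · rw [if_neg (fun hold => hc (fun t ht => hold t (by omega))), if_neg hc]
  · rw [dif_neg h, dif_neg (show ¬ 0 + k ≤ m by omega)]

lemma pl1_mul [NonUnitalNonAssocSemiring R] (M M' : Matrix (Fin N) (Fin N) R) :
    pl1 (M * M') = pl1 M * pl1 M' := by
  ext a b
  show (M * M') (a 0) (b 0) = _
  rw [Matrix.mul_apply, Matrix.mul_apply]
  exact Fintype.sum_equiv (Equiv.funUnique (Fin 1) (Fin N)).symm _ _ (fun x => rfl)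

lemma pl1_one [NonAssocSemiring R] [DecidableEq R] : pl1 (1 : Matrix (Fin N) (Fin N) R) = 1 := by
  ext a b
  simp only [pl1, Matrix.of_apply]
  by_cases h : a 0 = b 0
  · have hab : a = b := funext fun t => by rw [Subsingleton.elim t 0]; exact h
    rw [h, Matrix.one_apply_eq, hab, Matrix.one_apply_eq]
  · rw [Matrix.one_apply_ne h, Matrix.one_apply_ne (fun he => h (by rw [he]))]

lemma pl2_mul [NonUnitalNonAssocSemiring R] (M M' : RMat R N) :
    pl2 (M * M') = pl2 M * pl2 M' := by
  ext a b
  show (M * M') (a 0, a 1) (b 0, b 1) = _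
  rw [Matrix.mul_apply, Matrix.mul_apply]
  exact Fintype.sum_equiv (piFinTwoEquiv (fun _ => Fin N)).symm _ _ (fun x => rfl)

lemma pl2_one [NonAssocSemiring R] : pl2 (1 : RMat R N) = 1 := by
  ext a b
  simp only [pl2, Matrix.of_apply]
  by_cases h : a = b
  · subst h; rw [Matrix.one_apply_eq, Matrix.one_apply_eq]
  · have h2 : (a 0, a 1) ≠ (b 0, b 1) := by
      intro he
      apply h
      funext t
      have ht : t = 0 ∨ t = 1 := by omega
      rcases ht with rfl | rfl
      · exact congrArg Prod.fst he
      · exact congrArg Prod.snd he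
    rw [Matrix.one_apply_ne h2, Matrix.one_apply_ne h]

lemma pl2_smul {S : Type*} [Zero R] [SMulZeroClass S R] (c : S) (M : RMat R N) :
    pl2 (c • M) = c • pl2 M := rfl

lemma pl2_add [AddZeroClass R] (M M' : RMat R N) : pl2 (M + M') = pl2 M + pl2 M' := rfl

lemma pl2_sub [SubtractionMonoid R] (M M' : RMat R N) : pl2 (M - M') = pl2 M - pl2 M' := rfl

lemma pl2_map [Zero R] {S : Type*} [Zero S] (f : R → S) (M : RMat R N) :
    pl2 (M.map f) = (pl2 M).map f := rfl

/-- `place2` is multiplicative. -/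
lemma place2_mul [NonUnitalNonAssocSemiring R] {m i : ℕ} (h : i + 2 ≤ m) (M M' : RMat R N) :
    (place2 i M : TensM R N m) * place2 i M' = place2 i (M * M') := by
  rw [place2_eq_win, place2_eq_win, place2_eq_win, pl2_mul, win_mul h]

lemma place2_one [NonAssocSemiring R] {m i : ℕ} (h : i + 2 ≤ m) :
    (place2 i (1 : RMat R N) : TensM R N m) = 1 := by
  rw [place2_eq_win, pl2_one, win_one h]

end ident

end CHN
namespace CHN

section embedlemmas

variable {N : ℕ} {R : Type*}

lemma embed_mul [NonUnitalNonAssocSemiring R] {m k : ℕ} (h : k ≤ m) (M M' : TensM R N k) :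
    (embed m (M * M') : TensM R N m) = embed m M * embed m M' := by
  rw [embed_eq_win, embed_eq_win, embed_eq_win, win_mul (by omega)]

lemma embed_one [NonAssocSemiring R] {m k : ℕ} (h : k ≤ m) :
    (embed m (1 : TensM R N k)) = 1 := by
  rw [embed_eq_win, win_one (by omega)]

lemma embed_smul {S : Type*} [Zero R] [SMulZeroClass S R] (c : S) {m k : ℕ} (M : TensM R N k) :
    embed m (c • M) = c • embed m M := by
  rw [embed_eq_win, embed_eq_win, win_smul]

lemma embed_add [AddZeroClass R] {m k : ℕ} (M M' : TensM R N k) :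
    embed m (M + M') = embed m M + embed m M' := by
  rw [embed_eq_win, embed_eq_win, embed_eq_win, win_add]

lemma embed_sub [SubtractionMonoid R] {m k : ℕ} (M M' : TensM R N k) :
    embed m (M - M') = embed m M - embed m M' := by
  rw [embed_eq_win, embed_eq_win, embed_eq_win, win_sub]

lemma embed_embed [Zero R] {m d k : ℕ} (hk : k ≤ d) (hd : d ≤ m) (M : TensM R N k) :
    embed m (embed d M) = embed m M := by
  rw [embed_eq_win (M := embed d M), embed_eq_win (M := M), embed_eq_win (M := M),
    win_win (by omega) (by omega), Nat.zero_add]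

lemma embed_place2 [Zero R] {m k i : ℕ} (hik : i + 2 ≤ k) (hk : k ≤ m) (M : RMat R N) :
    embed m (place2 i M : TensM R N k) = (place2 i M : TensM R N m) := by
  rw [place2_eq_win (m := k), embed_eq_win, win_win (by omega) (by omega), Nat.zero_add,
    place2_eq_win]

lemma embed_map [Zero R] {S : Type*} [Zero S] (f : R → S) (h0 : f 0 = 0) {m k : ℕ}
    (M : TensM R N k) : (embed m M).map f = embed m (M.map f) := by
  rw [embed_eq_win, embed_eq_win, win_map _ h0]

lemma place2_add [AddZeroClass R] {m i : ℕ} (M M' : RMat R N) :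
    (place2 i (M + M') : TensM R N m) = place2 i M + place2 i M' := by
  rw [place2_eq_win, place2_eq_win, place2_eq_win, pl2_add, win_add]

lemma place2_smul {S : Type*} [Zero R] [SMulZeroClass S R] (c : S) {m i : ℕ} (M : RMat R N) :
    (place2 i (c • M) : TensM R N m) = c • place2 i M := by
  rw [place2_eq_win, place2_eq_win, pl2_smul, win_smul]

/-- Commutation of `place2`-operators in disjoint windows. -/
lemma place2_comm_far [NonUnitalNonAssocSemiring R] {m i i' : ℕ} (hii : i + 2 ≤ i')
    (h : i' + 2 ≤ m) (M M' : RMat R N)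
    (hcomm : ∀ p r u v, M p r * M' u v = M' u v * M p r) :
    (place2 i M : TensM R N m) * place2 i' M' = place2 i' M' * place2 i M := by
  rw [place2_eq_win, place2_eq_win]
  exact win_comm (by omega) (by omega) _ _ (fun p r u v => hcomm _ _ _ _)

/-- An embedded first-`k`-legs operator commutes with a `place2` at position `≥ k`. -/
lemma embed_place2_comm [NonUnitalNonAssocSemiring R] {m k i : ℕ} (hki : k ≤ i)
    (h : i + 2 ≤ m) (X : TensM R N k) (M : RMat R N)
    (hcomm : ∀ p r u v, X p r * pl2 M u v = pl2 M u v * X p r) :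
    (embed m X : TensM R N m) * place2 i M = place2 i M * embed m X := by
  rw [embed_eq_win, place2_eq_win]
  exact win_comm (by omega) (by omega) _ _ (fun p r u v => hcomm _ _ _ _)

/-- An embedded first-`k`-legs operator commutes with a `place1` at position `≥ k`. -/
lemma embed_place1_comm [NonUnitalNonAssocSemiring R] {m k i : ℕ} (hki : k ≤ i)
    (h : i + 1 ≤ m) (X : TensM R N k) (M : Matrix (Fin N) (Fin N) R)
    (hcomm : ∀ p r u v, X p r * pl1 M u v = pl1 M u v * X p r) :
    (embed m X : TensM R N m) * place1 i M = place1 i M * embed m X := by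
  rw [embed_eq_win, place1_eq_win]
  exact win_comm (by omega) (by omega) _ _ (fun p r u v => hcomm _ _ _ _)

/-- `place1` and `place2` in disjoint windows commute. -/
lemma place1_place2_comm [NonUnitalNonAssocSemiring R] {m l i : ℕ}
    (hdisj : l + 1 ≤ i ∨ i + 2 ≤ l) (hl : l + 1 ≤ m) (hi : i + 2 ≤ m)
    (M : Matrix (Fin N) (Fin N) R) (M' : RMat R N)
    (hcomm : ∀ p r u v, M p r * M' u v = M' u v * M p r) :
    (place1 l M : TensM R N m) * place2 i M' = place2 i M' * place1 l M := by
  rw [place1_eq_win, place2_eq_win]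
  rcases hdisj with hcase | hcase
  · exact win_comm (by omega) (by omega) _ _ (fun p r u v => hcomm _ _ _ _)
  · exact (win_comm (by omega) (by omega) _ _ (fun p r u v => (hcomm _ _ _ _).symm)).symm

end embedlemmas

section fieldtransport

variable {F : Type*} [Field F] {N : ℕ}

lemma hecke_place2 {q : F} {Rh : RMat F N} (hH : Hecke q Rh) {m i : ℕ} (h : i + 2 ≤ m) :
    (place2 i Rh : TensM F N m) * place2 i Rh = 1 + (q - q⁻¹) • place2 i Rh := by
  rw [place2_mul h, hH, place2_add, place2_smul, place2_one h]

lemma yb_place2 {Rh : RMat F N} (hYB : YangBaxter Rh) {m i : ℕ} (h : i + 3 ≤ m) :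
    (place2 i Rh : TensM F N m) * place2 (i + 1) Rh * place2 i Rh
      = place2 (i + 1) Rh * place2 i Rh * place2 (i + 1) Rh := by
  have e0 : (place2 i Rh : TensM F N m) = win m i 3 (place2 0 Rh : TensM F N 3) := by
    rw [place2_eq_win, place2_eq_win, win_win (by omega) (by omega), Nat.add_zero]
  have e1 : (place2 (i + 1) Rh : TensM F N m) = win m i 3 (place2 1 Rh : TensM F N 3) := by
    rw [place2_eq_win, place2_eq_win, win_win (by omega) (by omega)]
  rw [e0, e1, ← win_mul (by omega), ← win_mul (by omega), hYB, win_mul (by omega),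
    win_mul (by omega)]

end fieldtransport

end CHN
namespace CHN

section abstractHecke

variable {F : Type*} [Field F] {A : Type*} [Ring A] [Algebra F A]

lemma expand_sandwich (p κ : F) (aa t : A) (haa : aa * aa = aa) :
    aa * (p • 1 - κ • t) * aa = p • aa - κ • (aa * t * aa) := by
  rw [mul_sub, sub_mul, mul_smul_comm, mul_one, smul_mul_assoc, haa, mul_smul_comm,
    smul_mul_assoc]

lemma abs_eigen_easyL (q c : F) (aa B a' r : A) (hr : r * aa = (-q⁻¹) • aa)
    (ha : a' = c • (aa * B * aa)) : r * a' = (-q⁻¹) • a' := by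
  rw [ha, mul_smul_comm, ← mul_assoc, ← mul_assoc, hr, smul_mul_assoc, smul_mul_assoc,
    smul_comm]

lemma abs_eigen_easyR (q c : F) (aa B a' r : A) (hr : aa * r = (-q⁻¹) • aa)
    (ha : a' = c • (aa * B * aa)) : a' * r = (-q⁻¹) • a' := by
  rw [ha, smul_mul_assoc, mul_assoc, hr, mul_smul_comm, smul_comm]

lemma abs_absorbL (q p κ κ' : F) (hκ' : κ' ≠ 0) (hq : q ≠ 0) (hrel : κ' = p + q⁻¹ * κ)
    (aa t a' x : A) (hxaa : x * aa = x) (hxt : x * t = (-q⁻¹) • x)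
    (ha : a' = κ'⁻¹ • (aa * (p • 1 - κ • t) * aa)) : x * a' = x := by
  rw [ha, mul_smul_comm, ← mul_assoc, ← mul_assoc, hxaa, mul_sub, mul_smul_comm, mul_one,
    mul_smul_comm, hxt, smul_smul, sub_mul, smul_mul_assoc, smul_mul_assoc, hxaa]
  have hne : p + q⁻¹ * κ ≠ 0 := by rw [← hrel]; exact hκ'
  have hne2 : p * q + κ ≠ 0 := by
    intro h0
    apply hne
    have hk : κ = -(p * q) := by linear_combination h0
    rw [hk]
    field_simp
    ring
  rw [smul_sub, smul_smul, smul_smul, ← sub_smul, hrel]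
  rw [show (p + q⁻¹ * κ)⁻¹ * p - (p + q⁻¹ * κ)⁻¹ * (κ * -q⁻¹) = 1 from by
    field_simp
    ring, one_smul]

lemma abs_absorbR (q p κ κ' : F) (hκ' : κ' ≠ 0) (hq : q ≠ 0) (hrel : κ' = p + q⁻¹ * κ)
    (aa t a' x : A) (haax : aa * x = x) (htx : t * x = (-q⁻¹) • x)
    (ha : a' = κ'⁻¹ • (aa * (p • 1 - κ • t) * aa)) : a' * x = x := by
  rw [ha, smul_mul_assoc, mul_assoc, mul_assoc, haax, sub_mul, smul_mul_assoc, one_mul,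
    smul_mul_assoc, htx, smul_smul, mul_sub, mul_smul_comm, mul_smul_comm, haax]
  have hne : p + q⁻¹ * κ ≠ 0 := by rw [← hrel]; exact hκ'
  have hne2 : p * q + κ ≠ 0 := by
    intro h0
    apply hne
    have hk : κ = -(p * q) := by linear_combination h0
    rw [hk]
    field_simp
    ring
  rw [smul_sub, smul_smul, smul_smul, ← sub_smul, hrel]
  rw [show (p + q⁻¹ * κ)⁻¹ * p - (p + q⁻¹ * κ)⁻¹ * (κ * -q⁻¹) = 1 from by
    field_simp
    ring, one_smul]

lemma abs_eigen_hardL (q p κ κ' : F) (hq : q ≠ 0) (hκ : κ ≠ 0) (hκ' : κ' ≠ 0)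
    (aa t a' : A) (haa : aa * aa = aa)
    (hL : t * aa * t * aa = (q⁻¹ * p / κ) • aa + (p / κ) • (t * aa) - q⁻¹ • (aa * t * aa))
    (ha : a' = κ'⁻¹ • (aa * (p • 1 - κ • t) * aa)) :
    t * a' = (-q⁻¹) • a' := by
  have ha' : a' = κ'⁻¹ • (p • aa - κ • (aa * t * aa)) := by
    rw [ha, expand_sandwich p κ aa t haa]
  rw [ha', mul_smul_comm, mul_sub, mul_smul_comm, mul_smul_comm, ← mul_assoc, ← mul_assoc,
    hL]
  match_scalars <;> (try field_simp) <;> (try ring1) <;> (try exact Or.inl (mul_comm q κ'))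

lemma abs_eigen_hardR (q p κ κ' : F) (hq : q ≠ 0) (hκ : κ ≠ 0) (hκ' : κ' ≠ 0)
    (aa t a' : A) (haa : aa * aa = aa)
    (hR : aa * t * aa * t = (q⁻¹ * p / κ) • aa + (p / κ) • (aa * t) - q⁻¹ • (aa * t * aa))
    (ha : a' = κ'⁻¹ • (aa * (p • 1 - κ • t) * aa)) :
    a' * t = (-q⁻¹) • a' := by
  have ha' : a' = κ'⁻¹ • (p • aa - κ • (aa * t * aa)) := by
    rw [ha, expand_sandwich p κ aa t haa]
  rw [ha', smul_mul_assoc, sub_mul, smul_mul_assoc, smul_mul_assoc, hR]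
  match_scalars <;> (try field_simp) <;> (try ring1) <;> (try exact Or.inl (mul_comm q κ'))

lemma abs_L (q p κ κ' : F) (hq : q ≠ 0) (hκ : κ ≠ 0) (hκ' : κ' ≠ 0)
    (aa t r a' : A)
    (hc1 : r * aa = aa * r)
    (haa : aa * aa = aa)
    (h3 : aa * a' = a') (h3' : a' * aa = a')
    (h4 : t * a' = (-q⁻¹) • a')
    (hY : r * t * r = t * r * t)
    (hH : r * r = 1 + (q - q⁻¹) • r)
    (hrec : aa * t * aa = κ⁻¹ • (p • aa - κ' • a'))
    (ha : a' = κ'⁻¹ • (aa * (p • 1 - κ • t) * aa)) :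
    r * a' * r * a' = (q⁻¹ * (q * p) / κ') • a' + (q * p / κ') • (r * a')
      - q⁻¹ • (a' * r * a') := by
  have ha' : a' = κ'⁻¹ • (p • aa - κ • (aa * t * aa)) := by
    rw [ha, expand_sandwich p κ aa t haa]
  have hra : aa * (r * a') = r * a' := by
    rw [← mul_assoc, ← hc1, mul_assoc, h3]
  have e1 : r * aa * r * a' = a' + (q - q⁻¹) • (r * a') := by
    rw [hc1, mul_assoc aa r r, hH, mul_add, mul_one, mul_smul_comm, add_mul, h3,
      smul_mul_assoc, ← hc1, mul_assoc r aa a', h3]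
  have e2 : r * (aa * t * aa) * r * a'
      = (-q⁻¹) • (κ⁻¹ • (p • (r * a') - κ' • (a' * r * a'))) := by
    conv_lhs => rw [← mul_assoc r (aa * t) aa, ← mul_assoc r aa t, hc1]
    -- ((((aa * r) * t) * aa) * r) * a'
    conv_lhs => rw [mul_assoc (aa * r * t) aa r, mul_assoc (aa * r * t) (aa * r) a',
      mul_assoc aa r a', hra]
    -- ((aa * r) * t) * (r * a')
    conv_lhs => rw [mul_assoc aa r t, ← mul_assoc (aa * (r * t)) r a',
      mul_assoc aa (r * t) r, hY]
    -- (aa * ((t * r) * t)) * a'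
    conv_lhs => rw [← mul_assoc aa (t * r) t, mul_assoc (aa * (t * r)) t a', h4,
      mul_smul_comm, ← mul_assoc aa t r, mul_assoc (aa * t) r a', ← hra,
      ← mul_assoc (aa * t) aa (r * a'), hrec]
    -- (-q⁻¹) • ((κ⁻¹ • (p • aa - κ' • a')) * (r * a'))
    conv_lhs => rw [smul_mul_assoc, sub_mul, smul_mul_assoc, smul_mul_assoc, hra,
      ← mul_assoc a' r a']
  nth_rewrite 1 [ha']
  rw [mul_smul_comm, smul_mul_assoc, smul_mul_assoc, mul_sub, mul_smul_comm, mul_smul_comm,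
    sub_mul, sub_mul, smul_mul_assoc, smul_mul_assoc, smul_mul_assoc, smul_mul_assoc,
    e1, e2]
  match_scalars <;> (try field_simp) <;> (try ring1) <;> (try exact Or.inl (mul_comm q κ'))

lemma abs_R (q p κ κ' : F) (hq : q ≠ 0) (hκ : κ ≠ 0) (hκ' : κ' ≠ 0)
    (aa t r a' : A)
    (hc1 : r * aa = aa * r)
    (haa : aa * aa = aa)
    (h3 : aa * a' = a') (h3' : a' * aa = a')
    (h4' : a' * t = (-q⁻¹) • a')
    (hY : r * t * r = t * r * t)
    (hH : r * r = 1 + (q - q⁻¹) • r)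
    (hrec : aa * t * aa = κ⁻¹ • (p • aa - κ' • a'))
    (ha : a' = κ'⁻¹ • (aa * (p • 1 - κ • t) * aa)) :
    a' * r * a' * r = (q⁻¹ * (q * p) / κ') • a' + (q * p / κ') • (a' * r)
      - q⁻¹ • (a' * r * a') := by
  have ha' : a' = κ'⁻¹ • (p • aa - κ • (aa * t * aa)) := by
    rw [ha, expand_sandwich p κ aa t haa]
  have har : a' * r * aa = a' * r := by
    rw [mul_assoc, hc1, ← mul_assoc, h3']
  have e1 : a' * r * aa * r = a' + (q - q⁻¹) • (a' * r) := by
    rw [har, mul_assoc a' r r, hH, mul_add, mul_one, mul_smul_comm]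
  have e2 : a' * r * (aa * t * aa) * r
      = (-q⁻¹) • (κ⁻¹ • (p • (a' * r) - κ' • (a' * r * a'))) := by
    conv_lhs => rw [← mul_assoc (a' * r) (aa * t) aa, ← mul_assoc (a' * r) aa t, har]
    -- (((a' * r) * t) * aa) * r
    conv_lhs => rw [mul_assoc (a' * r * t) aa r, ← hc1, ← mul_assoc (a' * r * t) r aa]
    -- (((a' * r) * t) * r) * aa
    conv_lhs => rw [mul_assoc a' r t, mul_assoc a' (r * t) r, hY]
    -- (a' * ((t * r) * t)) * aa
    conv_lhs => rw [← mul_assoc a' (t * r) t, ← mul_assoc a' t r, h4', smul_mul_assoc,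
      smul_mul_assoc, smul_mul_assoc]
    -- (-q⁻¹) • ((((a' * r) * t) * aa))
    conv_lhs => rw [← har, mul_assoc (a' * r) aa t, mul_assoc (a' * r) (aa * t) aa, hrec]
    -- (-q⁻¹) • ((a' * r) * (κ⁻¹ • (p • aa - κ' • a')))
    conv_lhs => rw [mul_smul_comm, mul_sub, mul_smul_comm, mul_smul_comm, har]
  nth_rewrite 2 [ha']
  rw [mul_smul_comm, smul_mul_assoc, mul_sub, mul_smul_comm, mul_smul_comm,
    sub_mul, smul_mul_assoc, smul_mul_assoc, e1, e2]
  match_scalars <;> (try field_simp) <;> (try ring1) <;> (try exact Or.inl (mul_comm q κ'))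

end abstractHecke

end CHN
namespace CHN

section qnumlemmas

variable {F : Type*} [Field F]

lemma omega_ne {q : F} (hqnum : ∀ k : ℕ, 1 ≤ k → qnum q k ≠ 0) : q - q⁻¹ ≠ 0 := by
  intro h
  exact hqnum 1 le_rfl (by rw [qnum, pow_one, pow_one, h, div_zero])

lemma qnum_one {q : F} (hω : q - q⁻¹ ≠ 0) : qnum q 1 = 1 := by
  rw [qnum, pow_one, pow_one, div_self hω]

lemma qnum_succ {q : F} (hq : q ≠ 0) (hω : q - q⁻¹ ≠ 0) (n : ℕ) :
    qnum q (n + 1) = q ^ n + q⁻¹ * qnum q n := by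
  rw [qnum, div_eq_iff hω, qnum, add_mul, mul_assoc, div_mul_cancel₀ _ hω]
  ring

end qnumlemmas

section absrec

variable {F : Type*} [Field F] {A : Type*} [Ring A] [Algebra F A]

lemma abs_rec (p κ κ' : F) (hκ : κ ≠ 0) (hκ' : κ' ≠ 0) (aa t a' : A) (haa : aa * aa = aa)
    (ha : a' = κ'⁻¹ • (aa * (p • 1 - κ • t) * aa)) :
    aa * t * aa = κ⁻¹ • (p • aa - κ' • a') := by
  rw [ha, expand_sandwich p κ aa t haa]
  match_scalars <;> (try field_simp) <;> (try ring1)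

end absrec

section package

variable {F : Type*} [Field F] {N : ℕ} (q : F) (Rh : RMat F N)

/-- Left eigenvalue property of the antisymmetrizer. -/
def EigL (k : ℕ) : Prop := ∀ m, k ≤ m → ∀ i, i + 2 ≤ k →
  (place2 i Rh : TensM F N m) * embed m (antis Rh q k) = (-q⁻¹) • embed m (antis Rh q k)

/-- Right eigenvalue property of the antisymmetrizer. -/
def EigR (k : ℕ) : Prop := ∀ m, k ≤ m → ∀ i, i + 2 ≤ k →
  embed m (antis Rh q k) * (place2 i Rh : TensM F N m) = (-q⁻¹) • embed m (antis Rh q k)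

/-- Right absorption property. -/
def AbsL (k : ℕ) : Prop := ∀ m, k ≤ m → ∀ x : TensM F N m,
  (∀ i, i + 2 ≤ k → x * place2 i Rh = (-q⁻¹) • x) → x * embed m (antis Rh q k) = x

/-- Left absorption property. -/
def AbsR (k : ℕ) : Prop := ∀ m, k ≤ m → ∀ x : TensM F N m,
  (∀ i, i + 2 ≤ k → place2 i Rh * x = (-q⁻¹) • x) → embed m (antis Rh q k) * x = x

/-- Idempotency. -/
def Idem (k : ℕ) : Prop := ∀ m, k ≤ m →
  embed m (antis Rh q k) * embed m (antis Rh q k) = embed m (antis Rh q k)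

/-- The key quadratic word identity, left version. -/
def Lw (k : ℕ) : Prop := ∀ n, k = n + 1 → ∀ m, n + 2 ≤ m →
  (place2 n Rh : TensM F N m) * embed m (antis Rh q (n + 1)) * place2 n Rh *
      embed m (antis Rh q (n + 1))
    = (q⁻¹ * q ^ (n + 1) / qnum q (n + 1)) • embed m (antis Rh q (n + 1))
      + (q ^ (n + 1) / qnum q (n + 1)) •
          ((place2 n Rh : TensM F N m) * embed m (antis Rh q (n + 1)))
      - q⁻¹ • (embed m (antis Rh q (n + 1)) * place2 n Rh * embed m (antis Rh q (n + 1)))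

/-- The key quadratic word identity, right version. -/
def Rw (k : ℕ) : Prop := ∀ n, k = n + 1 → ∀ m, n + 2 ≤ m →
  embed m (antis Rh q (n + 1)) * (place2 n Rh : TensM F N m) *
      embed m (antis Rh q (n + 1)) * place2 n Rh
    = (q⁻¹ * q ^ (n + 1) / qnum q (n + 1)) • embed m (antis Rh q (n + 1))
      + (q ^ (n + 1) / qnum q (n + 1)) •
          (embed m (antis Rh q (n + 1)) * (place2 n Rh : TensM F N m))
      - q⁻¹ • (embed m (antis Rh q (n + 1)) * place2 n Rh * embed m (antis Rh q (n + 1)))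

def Pkg (k : ℕ) : Prop :=
  EigL q Rh k ∧ EigR q Rh k ∧ AbsL q Rh k ∧ AbsR q Rh k ∧ Idem q Rh k ∧ Lw q Rh k ∧ Rw q Rh k

/-- The embedded recursion formula for the antisymmetrizer. -/
lemma embed_antis_succ {m n : ℕ} (hm : n + 2 ≤ m) :
    embed m (antis Rh q (n + 2))
      = (qnum q (n + 2))⁻¹ • (embed m (antis Rh q (n + 1)) *
          ((q ^ (n + 1)) • (1 : TensM F N m) - qnum q (n + 1) • place2 n Rh) *
          embed m (antis Rh q (n + 1))) := by
  show embed m ((qnum q (n + 2))⁻¹ •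
      (embed (n + 2) (antis Rh q (n + 1)) *
        (q ^ (n + 1) • (1 : TensM F N (n + 2)) - qnum q (n + 1) • place2 n Rh) *
        embed (n + 2) (antis Rh q (n + 1)))) = _
  rw [embed_smul, embed_mul hm, embed_mul hm, embed_embed (by omega) hm, embed_sub,
    embed_smul, embed_smul, embed_one hm, embed_place2 (by omega) hm]

lemma pkg (hq : q ≠ 0) (hω : q - q⁻¹ ≠ 0) (hqn : ∀ k : ℕ, 1 ≤ k → qnum q k ≠ 0)
    (hYB : YangBaxter Rh) (hHecke : Hecke q Rh) : ∀ k : ℕ, Pkg q Rh k := by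
  have base0 : Pkg q Rh 0 := by
    have hA : ∀ m : ℕ, embed m (antis Rh q 0) = (1 : TensM F N m) := fun m =>
      embed_one (Nat.zero_le m)
    refine ⟨?_, ?_, ?_, ?_, ?_, ?_, ?_⟩
    · intro m hm i hi; omega
    · intro m hm i hi; omega
    · intro m hm x hx; rw [hA, mul_one]
    · intro m hm x hx; rw [hA, one_mul]
    · intro m hm; rw [hA, one_mul]
    · intro n hn; omega
    · intro n hn; omega
  have base1 : Pkg q Rh 1 := by
    have hA : ∀ m : ℕ, 1 ≤ m → embed m (antis Rh q 1) = (1 : TensM F N m) := fun m hm =>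
      embed_one hm
    refine ⟨?_, ?_, ?_, ?_, ?_, ?_, ?_⟩
    · intro m hm i hi; omega
    · intro m hm i hi; omega
    · intro m hm x hx; rw [hA m hm, mul_one]
    · intro m hm x hx; rw [hA m hm, one_mul]
    · intro m hm; rw [hA m hm, one_mul]
    · intro n hn m hm
      obtain rfl : n = 0 := by omega
      rw [hA m (by omega)]
      simp only [mul_one, one_mul]
      rw [qnum_one hω, hecke_place2 hHecke (by omega)]
      match_scalars <;> (try field_simp) <;> ring
    · intro n hn m hm
      obtain rfl : n = 0 := by omega
      rw [hA m (by omega)]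
      simp only [mul_one, one_mul]
      rw [qnum_one hω, hecke_place2 hHecke (by omega)]
      match_scalars <;> (try field_simp) <;> ring
  intro k
  induction k using Nat.twoStepInduction with
  | zero => exact base0
  | one => exact base1
  | more n IH1 IH2 =>
    obtain ⟨eL, eR, aL, aR, idm, lw, rw'⟩ := IH2
    have hκ : qnum q (n + 1) ≠ 0 := hqn (n + 1) (by omega)
    have hκ' : qnum q (n + 2) ≠ 0 := hqn (n + 2) (by omega)
    have hrel : qnum q (n + 2) = q ^ (n + 1) + q⁻¹ * qnum q (n + 1) :=
      qnum_succ hq hω (n + 1)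
    -- the recursion formula, on an arbitrary ambient space
    have ha : ∀ m, n + 2 ≤ m → embed m (antis Rh q (n + 2))
        = (qnum q (n + 2))⁻¹ • (embed m (antis Rh q (n + 1)) *
            ((q ^ (n + 1)) • (1 : TensM F N m) - qnum q (n + 1) • place2 n Rh) *
            embed m (antis Rh q (n + 1))) := fun m hm => embed_antis_succ q Rh hm
    -- eigenvalue properties at level n+2
    have eL' : EigL q Rh (n + 2) := by
      intro m hm i hi
      by_cases hin : i = n
      · subst hin
        exact abs_eigen_hardL q (q ^ (i + 1)) (qnum q (i + 1)) (qnum q (i + 2)) hq hκ hκ'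
          _ _ _ (idm m (by omega)) (lw i rfl m hm) (ha m hm)
      · exact abs_eigen_easyL q (qnum q (n + 2))⁻¹ _ _ _ _
          (eL m (by omega) i (by omega)) (ha m hm)
    have eR' : EigR q Rh (n + 2) := by
      intro m hm i hi
      by_cases hin : i = n
      · subst hin
        exact abs_eigen_hardR q (q ^ (i + 1)) (qnum q (i + 1)) (qnum q (i + 2)) hq hκ hκ'
          _ _ _ (idm m (by omega)) (rw' i rfl m hm) (ha m hm)
      · exact abs_eigen_easyR q (qnum q (n + 2))⁻¹ _ _ _ _
          (eR m (by omega) i (by omega)) (ha m hm)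
    have aL' : AbsL q Rh (n + 2) := by
      intro m hm x hx
      exact abs_absorbL q (q ^ (n + 1)) (qnum q (n + 1)) (qnum q (n + 2)) hκ' hq hrel
        _ _ _ _ (aL m (by omega) x (fun i hi => hx i (by omega)))
        (hx n (by omega)) (ha m hm)
    have aR' : AbsR q Rh (n + 2) := by
      intro m hm x hx
      exact abs_absorbR q (q ^ (n + 1)) (qnum q (n + 1)) (qnum q (n + 2)) hκ' hq hrel
        _ _ _ _ (aR m (by omega) x (fun i hi => hx i (by omega)))
        (hx n (by omega)) (ha m hm)
    have idm' : Idem q Rh (n + 2) := by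
      intro m hm
      exact aL' m hm _ (fun i hi => eR' m hm i hi)
    refine ⟨eL', eR', aL', aR', idm', ?_, ?_⟩
    · intro n' hn' m hm
      obtain rfl : n' = n + 1 := by omega
      have hcomm : (place2 (n + 1) Rh : TensM F N m) * embed m (antis Rh q (n + 1))
          = embed m (antis Rh q (n + 1)) * place2 (n + 1) Rh := by
        rw [embed_eq_win, place2_eq_win]
        exact (win_comm (by omega) (by omega) _ _ (fun p r u v => mul_comm _ _)).symm
      have key := abs_L q (q ^ (n + 1)) (qnum q (n + 1)) (qnum q (n + 2)) hq hκ hκ'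
        (embed m (antis Rh q (n + 1))) (place2 n Rh) (place2 (n + 1) Rh)
        (embed m (antis Rh q (n + 2)))
        hcomm (idm m (by omega))
        (aR m (by omega) _ (fun i hi => eL' m (by omega) i (by omega)))
        (aL m (by omega) _ (fun i hi => eR' m (by omega) i (by omega)))
        (eL' m (by omega) n (by omega))
        (yb_place2 hYB (by omega)).symm
        (hecke_place2 hHecke (by omega))
        (abs_rec (q ^ (n + 1)) (qnum q (n + 1)) (qnum q (n + 2)) hκ hκ' _ _ _
          (idm m (by omega)) (ha m (by omega)))
        (ha m (by omega))
      rwa [show q * q ^ (n + 1) = q ^ (n + 2) from by ring] at key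
    · intro n' hn' m hm
      obtain rfl : n' = n + 1 := by omega
      have hcomm : (place2 (n + 1) Rh : TensM F N m) * embed m (antis Rh q (n + 1))
          = embed m (antis Rh q (n + 1)) * place2 (n + 1) Rh := by
        rw [embed_eq_win, place2_eq_win]
        exact (win_comm (by omega) (by omega) _ _ (fun p r u v => mul_comm _ _)).symm
      have key := abs_R q (q ^ (n + 1)) (qnum q (n + 1)) (qnum q (n + 2)) hq hκ hκ'
        (embed m (antis Rh q (n + 1))) (place2 n Rh) (place2 (n + 1) Rh)
        (embed m (antis Rh q (n + 2)))
        hcomm (idm m (by omega))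
        (aR m (by omega) _ (fun i hi => eL' m (by omega) i (by omega)))
        (aL m (by omega) _ (fun i hi => eR' m (by omega) i (by omega)))
        (eR' m (by omega) n (by omega))
        (yb_place2 hYB (by omega)).symm
        (hecke_place2 hHecke (by omega))
        (abs_rec (q ^ (n + 1)) (qnum q (n + 1)) (qnum q (n + 2)) hκ hκ' _ _ _
          (idm m (by omega)) (ha m (by omega)))
        (ha m (by omega))
      rwa [show q * q ^ (n + 1) = q ^ (n + 2) from by ring] at key

end package

end CHN
namespace CHN

section tracelem

variable {N : ℕ} {R : Type*}

lemma snoc_lt {m : ℕ} (a : Fin m → Fin N) (x : Fin N) (t : Fin (m + 1)) (h : t.val < m) :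
    (Fin.snoc a x : Fin (m + 1) → Fin N) t = a ⟨t.val, h⟩ := by
  have ht : t = Fin.castSucc ⟨t.val, h⟩ := by ext; simp
  conv_lhs => rw [ht]
  rw [Fin.snoc_castSucc]

lemma snoc_top {m : ℕ} (a : Fin m → Fin N) (x : Fin N) (t : Fin (m + 1)) (h : t.val = m) :
    (Fin.snoc a x : Fin (m + 1) → Fin N) t = x := by
  have ht : t = Fin.last m := by ext; simpa using h
  conv_lhs => rw [ht]
  rw [Fin.snoc_last]

lemma embed_snoc_apply [Zero R] {m : ℕ} (P : TensM R N m) (a c : Fin m → Fin N)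
    (x z : Fin N) :
    (embed (m + 1) P : TensM R N (m + 1)) (Fin.snoc a x) (Fin.snoc c z)
      = if x = z then P a c else 0 := by
  simp only [embed, Matrix.of_apply, dif_pos (show m ≤ m + 1 by omega)]
  by_cases hxz : x = z
  · rw [if_pos hxz, if_pos (fun t ht => by
      rw [snoc_top a x t (by omega), snoc_top c z t (by omega)]; exact hxz)]
    congr 1
    · funext s
      rw [snoc_lt a x _ s.isLt]
    · funext s
      rw [snoc_lt c z _ s.isLt]
  · rw [if_neg hxz, if_neg (fun hcond => hxz (by
      have := hcond (Fin.last m) (by simp)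
      rwa [Fin.snoc_last, Fin.snoc_last] at this))]

/-- The equivalence `(Fin m → Fin N) × Fin N ≃ (Fin (m+1) → Fin N)` via `snoc`. -/
def snocEquiv (m : ℕ) : ((Fin m → Fin N) × Fin N) ≃ (Fin (m + 1) → Fin N) where
  toFun p := Fin.snoc p.1 p.2
  invFun c := (Fin.init c, c (Fin.last m))
  left_inv p := by
    ext
    · simp [Fin.init_snoc]
    · simp [Fin.snoc_last]
  right_inv c := by
    simp [Fin.snoc_init_self]

/-- Cyclicity of the partial trace for a scalar operator not touching the last leg. -/
lemma trAllButLast_cycle {F : Type*} [Field F] {𝒜 : Type*} [Ring 𝒜] [Algebra F 𝒜]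
    {m : ℕ} (P : TensM F N m) (M : TensM 𝒜 N (m + 1)) :
    trAllButLast (lift 𝒜 (embed (m + 1) P) * M)
      = trAllButLast (M * lift 𝒜 (embed (m + 1) P)) := by
  have happly : ∀ (a c : Fin m → Fin N) (x z : Fin N),
      lift 𝒜 (embed (m + 1) P) (Fin.snoc a x) (Fin.snoc c z)
        = if x = z then algebraMap F 𝒜 (P a c) else 0 := by
    intro a c x z
    show algebraMap F 𝒜 ((embed (m + 1) P : TensM F N (m + 1)) (Fin.snoc a x) (Fin.snoc c z)) = _
    rw [embed_snoc_apply, apply_ite (algebraMap F 𝒜), map_zero]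
  ext x y
  simp only [trAllButLast, Matrix.of_apply, Matrix.mul_apply]
  have lhs_eq : ∀ a : Fin m → Fin N,
      (∑ c : Fin (m + 1) → Fin N,
        lift 𝒜 (embed (m + 1) P) (Fin.snoc a x) c * M c (Fin.snoc a y))
      = ∑ c' : Fin m → Fin N, algebraMap F 𝒜 (P a c') * M (Fin.snoc c' x) (Fin.snoc a y) := by
    intro a
    rw [← Fintype.sum_equiv (snocEquiv (N := N) m)
      (fun p => lift 𝒜 (embed (m + 1) P) (Fin.snoc a x) (snocEquiv m p)
        * M (snocEquiv m p) (Fin.snoc a y)) _ (fun p => rfl)]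
    rw [Fintype.sum_prod_type]
    refine Finset.sum_congr rfl (fun c' _ => ?_)
    have : ∀ z : Fin N,
        lift 𝒜 (embed (m + 1) P) (Fin.snoc a x) (snocEquiv m (c', z))
          * M (snocEquiv m (c', z)) (Fin.snoc a y)
        = if x = z then algebraMap F 𝒜 (P a c') * M (Fin.snoc c' z) (Fin.snoc a y) else 0 := by
      intro z
      show lift 𝒜 (embed (m + 1) P) (Fin.snoc a x) (Fin.snoc c' z)
          * M (Fin.snoc c' z) (Fin.snoc a y) = _
      rw [happly]
      by_cases hxz : x = z
      · rw [if_pos hxz, if_pos hxz]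
      · rw [if_neg hxz, if_neg hxz, zero_mul]
    rw [Finset.sum_congr rfl (fun z _ => this z), Finset.sum_ite_eq]
    simp
  have rhs_eq : ∀ a : Fin m → Fin N,
      (∑ c : Fin (m + 1) → Fin N,
        M (Fin.snoc a x) c * lift 𝒜 (embed (m + 1) P) c (Fin.snoc a y))
      = ∑ c' : Fin m → Fin N, M (Fin.snoc a x) (Fin.snoc c' y) * algebraMap F 𝒜 (P c' a) := by
    intro a
    rw [← Fintype.sum_equiv (snocEquiv (N := N) m)
      (fun p => M (Fin.snoc a x) (snocEquiv m p)
        * lift 𝒜 (embed (m + 1) P) (snocEquiv m p) (Fin.snoc a y)) _ (fun p => rfl)]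
    rw [Fintype.sum_prod_type]
    refine Finset.sum_congr rfl (fun c' _ => ?_)
    have : ∀ z : Fin N,
        M (Fin.snoc a x) (snocEquiv m (c', z))
          * lift 𝒜 (embed (m + 1) P) (snocEquiv m (c', z)) (Fin.snoc a y)
        = if z = y then M (Fin.snoc a x) (Fin.snoc c' z) * algebraMap F 𝒜 (P c' a) else 0 := by
      intro z
      show M (Fin.snoc a x) (Fin.snoc c' z)
          * lift 𝒜 (embed (m + 1) P) (Fin.snoc c' z) (Fin.snoc a y) = _
      rw [happly]
      by_cases hzy : z = y
      · rw [if_pos hzy, if_pos hzy]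
      · rw [if_neg hzy, if_neg hzy, mul_zero]
    rw [Finset.sum_congr rfl (fun z _ => this z), Finset.sum_ite_eq']
    simp
  rw [Finset.sum_congr rfl (fun a _ => lhs_eq a), Finset.sum_congr rfl (fun a _ => rhs_eq a)]
  rw [Finset.sum_comm]
  refine Finset.sum_congr rfl (fun c' _ => Finset.sum_congr rfl (fun a _ => ?_))
  exact Algebra.commutes (R := F) (A := 𝒜) _ _

/-- Splitting a multi-index into two blocks. -/
def splitEquiv (k l : ℕ) : ((Fin k → Fin N) × (Fin l → Fin N)) ≃ (Fin (k + l) → Fin N) where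
  toFun p t := if h : t.val < k then p.1 ⟨t.val, h⟩ else p.2 ⟨t.val - k, by omega⟩
  invFun a := (fun s => a ⟨s.val, by omega⟩, fun s => a ⟨k + s.val, by omega⟩)
  left_inv p := by
    ext s
    · simp only []
      rw [dif_pos s.isLt]
    · simp only []
      rw [dif_neg (by omega)]
      congr 1
      ext
      simp
  right_inv a := by
    funext t
    by_cases ht : t.val < k
    · simp only [dif_pos ht]
    · simp only [dif_neg ht]
      congr 1
      ext
      simp
      omega

end tracelem

end CHN
namespace CHN

section tracefactor

variable {N : ℕ}

lemma res_snoc_first {k l : ℕ} (a : Fin (k + l) → Fin N) (x : Fin N)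
    (h : 0 + k ≤ k + l + 1) :
    res 0 k (Fin.snoc a x) h = fun s : Fin k => a ⟨s.val, by omega⟩ := by
  funext s
  show (Fin.snoc a x : Fin (k + l + 1) → Fin N) ⟨0 + s.val, by omega⟩ = _
  rw [snoc_lt _ _ _ (show 0 + s.val < k + l by omega)]
  congr 1
  ext
  simp

lemma res_snoc_second {k l : ℕ} (a : Fin (k + l) → Fin N) (x : Fin N)
    (h : k + (l + 1) ≤ k + l + 1) :
    res k (l + 1) (Fin.snoc a x) h
      = Fin.snoc (fun s : Fin l => a ⟨k + s.val, by omega⟩) x := by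
  funext s
  show (Fin.snoc a x : Fin (k + l + 1) → Fin N) ⟨k + s.val, by omega⟩ = _
  by_cases hs : s.val < l
  · rw [snoc_lt _ _ _ (show k + s.val < k + l by omega),
      snoc_lt _ _ s (show s.val < l from hs)]
  · have hsl : s.val = l := by have := s.isLt; omega
    rw [snoc_top _ _ _ (show k + s.val = k + l by omega), snoc_top _ _ s hsl]

lemma split_first (k l : ℕ) (u : Fin k → Fin N) (v : Fin l → Fin N) :
    (fun s : Fin k => splitEquiv k l (u, v) ⟨s.val, by omega⟩) = u := by
  funext s
  show (if h : s.val < k then u ⟨s.val, h⟩ else _) = u s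
  rw [dif_pos s.isLt]

lemma split_second (k l : ℕ) (u : Fin k → Fin N) (v : Fin l → Fin N) :
    (fun s : Fin l => splitEquiv k l (u, v) ⟨k + s.val, by omega⟩) = v := by
  funext s
  show (if h : k + s.val < k then u ⟨k + s.val, h⟩ else v ⟨k + s.val - k, by omega⟩) = v s
  rw [dif_neg (by omega)]
  congr 1
  ext
  simp

lemma trace_factor {𝒜 : Type*} [Ring 𝒜] {k l : ℕ} (X : TensM 𝒜 N k) (Y : TensM 𝒜 N (l + 1)) :
    trAllButLast (win (k + l + 1) 0 k X * win (k + l + 1) k (l + 1) Y)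
      = Matrix.trace X • trAllButLast Y := by
  have hprod := win_mul_win_left (m := k + l + 1) (off := 0) (d := k) (off' := k)
    (d' := l + 1) (by omega) (by omega) X Y
  ext x y
  simp only [trAllButLast, Matrix.of_apply, Matrix.smul_apply]
  have hentry : ∀ a : Fin (k + l) → Fin N,
      (win (k + l + 1) 0 k X * win (k + l + 1) k (l + 1) Y) (Fin.snoc a x) (Fin.snoc a y)
        = X (fun s => a ⟨s.val, by omega⟩) (fun s => a ⟨s.val, by omega⟩)
          * Y (Fin.snoc (fun s : Fin l => a ⟨k + s.val, by omega⟩) x)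
              (Fin.snoc (fun s : Fin l => a ⟨k + s.val, by omega⟩) y) := by
    intro a
    rw [hprod]
    show (if agreeOff2 0 k k (l + 1) (Fin.snoc a x) (Fin.snoc a y) then _ else 0) = _
    rw [if_pos (show agreeOff2 0 k k (l + 1) (Fin.snoc a x) (Fin.snoc a y) from
      fun t ht => by exfalso; have := t.isLt; omega)]
    rw [res_snoc_first, res_snoc_first, res_snoc_second, res_snoc_second]
  rw [Finset.sum_congr rfl (fun a _ => hentry a)]
  rw [← Fintype.sum_equiv (splitEquiv (N := N) k l)
    (fun p => X (fun s => splitEquiv k l p ⟨s.val, by omega⟩)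
        (fun s => splitEquiv k l p ⟨s.val, by omega⟩)
      * Y (Fin.snoc (fun s : Fin l => splitEquiv k l p ⟨k + s.val, by omega⟩) x)
          (Fin.snoc (fun s : Fin l => splitEquiv k l p ⟨k + s.val, by omega⟩) y))
    _ (fun p => rfl)]
  rw [Fintype.sum_prod_type]
  have hterm : ∀ (u : Fin k → Fin N) (v : Fin l → Fin N),
      X (fun s => splitEquiv k l (u, v) ⟨s.val, by omega⟩)
          (fun s => splitEquiv k l (u, v) ⟨s.val, by omega⟩)
        * Y (Fin.snoc (fun s : Fin l => splitEquiv k l (u, v) ⟨k + s.val, by omega⟩) x)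
            (Fin.snoc (fun s : Fin l => splitEquiv k l (u, v) ⟨k + s.val, by omega⟩) y)
      = X u u * Y (Fin.snoc v x) (Fin.snoc v y) := by
    intro u v
    rw [split_first, split_second]
  rw [Finset.sum_congr rfl (fun u _ => Finset.sum_congr rfl (fun v _ => hterm u v))]
  rw [smul_eq_mul, Matrix.trace]
  rw [Finset.sum_congr rfl (fun u _ => (Finset.mul_sum _ _ _).symm), ← Finset.sum_mul]
  rfl

end tracefactor

end CHN
namespace CHN

section structural

variable {F : Type*} [Field F] {N : ℕ} (𝒜 : Type*) [Ring 𝒜] [Algebra F 𝒜]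

lemma lift_mul {m : ℕ} (X Y : TensM F N m) : lift 𝒜 (X * Y) = lift 𝒜 X * lift 𝒜 Y :=
  Matrix.map_mul

lemma lift_one {m : ℕ} : lift 𝒜 (1 : TensM F N m) = 1 :=
  Matrix.map_one _ (map_zero _) (map_one _)

lemma lift_smul {m : ℕ} (c : F) (X : TensM F N m) : lift 𝒜 (c • X) = c • lift 𝒜 X := by
  ext a b
  show algebraMap F 𝒜 ((c • X) a b) = _
  simp only [Matrix.smul_apply, smul_eq_mul, map_mul, Algebra.smul_def, lift, Matrix.map_apply]

lemma lift_add {m : ℕ} (X Y : TensM F N m) : lift 𝒜 (X + Y) = lift 𝒜 X + lift 𝒜 Y := by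
  ext a b
  show algebraMap F 𝒜 ((X + Y) a b) = _
  simp only [Matrix.add_apply, map_add, lift, Matrix.map_apply]

lemma lift_place2 {m i : ℕ} (Rh : RMat F N) :
    lift 𝒜 (place2 i Rh : TensM F N m) = win m i 2 (pl2 (Rh.map (algebraMap F 𝒜))) := by
  show (place2 i Rh : TensM F N m).map (algebraMap F 𝒜) = _
  rw [place2_eq_win, win_map _ (map_zero _), pl2_map]

/-- `win` of a prefix `Tprod`. -/
lemma win_Tprod {m k n : ℕ} (hk : k ≤ m) (hn : n ≤ k) (T : Matrix (Fin N) (Fin N) 𝒜) :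
    win m 0 k (Tprod k T n) = Tprod m T n := by
  induction n with
  | zero => exact win_one (by omega)
  | succ n IH =>
    show win m 0 k (Tprod k T n * place1 n T) = Tprod m T n * place1 n T
    rw [win_mul (by omega), IH (by omega), place1_eq_win (m := k),
      win_win (by omega) (by omega), Nat.zero_add, place1_eq_win (m := m)]

/-- Products of `T`-copies starting at position `i`. -/
def TprodFrom (m : ℕ) (T : Matrix (Fin N) (Fin N) 𝒜) (i : ℕ) : ℕ → TensM 𝒜 N m
  | 0 => 1
  | n + 1 => TprodFrom m T i n * place1 (i + n) T

lemma Tprod_split (m : ℕ) (T : Matrix (Fin N) (Fin N) 𝒜) (i n : ℕ) :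
    Tprod m T (i + n) = Tprod m T i * TprodFrom 𝒜 m T i n := by
  induction n with
  | zero => rw [Nat.add_zero, TprodFrom, mul_one]
  | succ n IH =>
    show Tprod m T (i + n) * place1 (i + n) T = _
    rw [IH, TprodFrom, mul_assoc]

lemma win_Tprod_from {m d k n : ℕ} (hn : n ≤ d) (hm : k + d ≤ m)
    (T : Matrix (Fin N) (Fin N) 𝒜) :
    win m k d (Tprod d T n) = TprodFrom 𝒜 m T k n := by
  induction n with
  | zero => exact win_one hm
  | succ n IH =>
    show win m k d (Tprod d T n * place1 n T) = TprodFrom 𝒜 m T k n * place1 (k + n) T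
    rw [win_mul hm, IH (by omega), place1_eq_win (m := d), win_win hm (by omega),
      place1_eq_win (m := m)]

end structural

section chains

variable {F : Type*} [Field F] {N : ℕ} (Rh : RMat F N)

lemma win_chain {m d i n k : ℕ} (hn : i + n + 1 ≤ d) (hm : k + d ≤ m) :
    win m k d (rChainFrom d Rh i n) = rChainFrom m Rh (k + i) n := by
  induction n with
  | zero => exact win_one hm
  | succ n IH =>
    show win m k d (rChainFrom d Rh i n * place2 (i + n) Rh)
      = rChainFrom m Rh (k + i) n * place2 (k + i + n) Rh
    rw [win_mul hm, IH (by omega), place2_eq_win (m := d), win_win hm (by omega),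
      place2_eq_win (m := m), Nat.add_assoc]

lemma chain_cons {m i n : ℕ} :
    rChainFrom m Rh i (n + 1) = place2 i Rh * rChainFrom m Rh (i + 1) n := by
  induction n with
  | zero =>
    show rChainFrom m Rh i 0 * place2 (i + 0) Rh = place2 i Rh * rChainFrom m Rh (i + 1) 0
    rw [rChainFrom, rChainFrom, one_mul, mul_one, Nat.add_zero]
  | succ n IH =>
    show rChainFrom m Rh i (n + 1) * place2 (i + (n + 1)) Rh
      = place2 i Rh * (rChainFrom m Rh (i + 1) n * place2 (i + 1 + n) Rh)
    rw [IH, mul_assoc, show i + 1 + n = i + (n + 1) from by omega]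

end chains

section rttcomm

variable {F : Type*} [Field F] {N : ℕ} (𝒜 : Type*) [Ring 𝒜] [Algebra F 𝒜]
variable (Rh : RMat F N) (T : Matrix (Fin N) (Fin N) 𝒜)

/-- `T`-products on the first `k` legs commute with a scalar `place2` at position `≥ k`. -/
lemma Tprod_comm_place2 {m k i : ℕ} (hki : k ≤ i) (hi : i + 2 ≤ m) :
    Commute (Tprod m T k) (lift 𝒜 (place2 i Rh : TensM F N m)) := by
  induction k with
  | zero =>
    show Commute (1 : TensM 𝒜 N m) _
    exact Commute.one_left _
  | succ k IH =>
    show Commute (Tprod m T k * place1 k T) _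
    refine Commute.mul_left (IH (by omega)) ?_
    show place1 k T * lift 𝒜 (place2 i Rh) = lift 𝒜 (place2 i Rh) * place1 k T
    rw [lift_place2, ← place2_eq_win]
    exact place1_place2_comm (Or.inl (by omega)) (by omega) hi T _
      (fun p r u v => (Algebra.commutes (R := F) _ _).symm)

lemma Tprod_comm_chain {m k i l : ℕ} (hki : k ≤ i) (h : i + l + 1 ≤ m) :
    Commute (Tprod m T k) (lift 𝒜 (rChainFrom m Rh i l)) := by
  induction l with
  | zero => rw [rChainFrom, lift_one]; exact Commute.one_right _
  | succ l IH =>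
    show Commute _ (lift 𝒜 (rChainFrom m Rh i l * place2 (i + l) Rh))
    rw [lift_mul]
    exact Commute.mul_right (IH (by omega))
      (Tprod_comm_place2 𝒜 Rh T (by omega) (by omega))

lemma pl2_TT : pl2 (TT T) = win 2 0 1 (pl1 T) * win 2 1 1 (pl1 T) := by
  rw [win_mul_win_left (by omega) (by omega)]
  ext a b
  show TT T (a 0, a 1) (b 0, b 1) = _
  rw [Matrix.of_apply, if_pos (show agreeOff2 0 1 1 1 a b from
    fun t ht => by exfalso; have := t.isLt; omega)]
  rfl

lemma place1_pair {m i : ℕ} (h : i + 2 ≤ m) :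
    (place1 i T : TensM 𝒜 N m) * place1 (i + 1) T = win m i 2 (pl2 (TT T)) := by
  rw [pl2_TT, win_mul (by omega), win_win (by omega) (by omega),
    win_win (by omega) (by omega), ← place1_eq_win, ← place1_eq_win]
  rfl

/-- The transported RTT relation. -/
lemma rtt_place2 (hT : RTTrel 𝒜 Rh T) {m i : ℕ} (h : i + 2 ≤ m) :
    lift 𝒜 (place2 i Rh : TensM F N m) * (place1 i T * place1 (i + 1) T)
      = (place1 i T * place1 (i + 1) T) * lift 𝒜 (place2 i Rh) := by
  rw [lift_place2, place1_pair 𝒜 T h, ← win_mul h, ← win_mul h, ← pl2_mul, ← pl2_mul,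
    hT]

/-- A scalar `place2` strictly inside the first `k` legs commutes with `T₁ ⋯ T_k`. -/
lemma rtt_comm_Tprod (hT : RTTrel 𝒜 Rh T) {m i : ℕ} (hm : ∀ k, i + 2 ≤ k → k ≤ m →
    Commute (lift 𝒜 (place2 i Rh : TensM F N m)) (Tprod m T k)) : True := trivial

lemma chain_comm_Tprod (hT : RTTrel 𝒜 Rh T) {m i k : ℕ} (hik : i + 2 ≤ k) (hk : k ≤ m) :
    Commute (lift 𝒜 (place2 i Rh : TensM F N m)) (Tprod m T k) := by
  induction k, hik using Nat.le_induction with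
  | base =>
    show Commute _ (Tprod m T (i + 1) * place1 (i + 1) T)
    have h1 : Tprod m T (i + 1) = Tprod m T i * place1 i T := rfl
    rw [h1, mul_assoc]
    refine Commute.mul_right ?_ ?_
    · exact (Tprod_comm_place2 𝒜 Rh T le_rfl (by omega)).symm
    · exact rtt_place2 𝒜 Rh T hT (by omega)
  | succ k hik IH =>
    show Commute _ (Tprod m T k * place1 k T)
    refine Commute.mul_right (IH (by omega)) ?_
    rw [lift_place2, ← place2_eq_win]
    exact (place1_place2_comm (Or.inr (by omega)) (by omega) (by omega) T _
      (fun p r u v => (Algebra.commutes (R := F) _ _).symm)).symm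

/-- The antisymmetrizer on the first `k'` legs commutes with `T₁ ⋯ T_k` for `k' ≤ k`. -/
lemma antis_comm_Tprod (q : F) (hT : RTTrel 𝒜 Rh T) {m k : ℕ} (hk : k ≤ m) :
    ∀ k', k' ≤ k → Commute (lift 𝒜 (embed m (antis Rh q k'))) (Tprod m T k) := by
  intro k'
  induction k' using Nat.twoStepInduction with
  | zero =>
    intro _
    rw [show antis Rh q 0 = 1 from rfl, embed_one (by omega), lift_one]
    exact Commute.one_left _
  | one =>
    intro _
    rw [show antis Rh q 1 = 1 from rfl, embed_one (by omega), lift_one]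
    exact Commute.one_left _
  | more n IH1 IH2 =>
    intro hkk
    rw [embed_antis_succ q Rh (by omega), lift_smul, lift_mul, lift_mul]
    refine Commute.smul_left ?_ _
    refine Commute.mul_left (Commute.mul_left (IH2 (by omega)) ?_) (IH2 (by omega))
    show Commute (lift 𝒜 (q ^ (n + 1) • (1 : TensM F N m) - qnum q (n + 1) • place2 n Rh)) _
    have hsub : (q ^ (n + 1)) • (1 : TensM F N m) - qnum q (n + 1) • place2 n Rh
        = (q ^ (n + 1)) • (1 : TensM F N m) + (-(qnum q (n + 1))) • place2 n Rh := by
      rw [neg_smul, ← sub_eq_add_neg]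
    rw [hsub, lift_add, lift_smul, lift_smul, lift_one]
    refine Commute.add_left ?_ ?_
    · exact Commute.smul_left (Commute.one_left _) _
    · exact Commute.smul_left (chain_comm_Tprod 𝒜 Rh T hT (by omega) hk) _

end rttcomm

end CHN
namespace CHN

section finalaux

variable {F : Type*} [Field F] {N : ℕ}

lemma trAllButLast_smul {R S : Type*} [AddCommMonoid R] [Monoid S] [DistribMulAction S R]
    {m : ℕ} (c : S) (M : TensM R N m) :
    trAllButLast (c • M) = c • trAllButLast M := by
  cases m with
  | zero => show (0 : Matrix (Fin N) (Fin N) R) = c • 0; rw [smul_zero]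
  | succ m =>
    ext x y
    show (∑ a : Fin m → Fin N, (c • M) (Fin.snoc a x) (Fin.snoc a y)) = _
    show _ = c • (∑ a : Fin m → Fin N, M (Fin.snoc a x) (Fin.snoc a y))
    rw [Finset.smul_sum]
    rfl

lemma trAllButLast_add {R : Type*} [AddCommMonoid R] {m : ℕ} (M M' : TensM R N m) :
    trAllButLast (M + M') = trAllButLast M + trAllButLast M' := by
  cases m with
  | zero => show (0 : Matrix (Fin N) (Fin N) R) = 0 + 0; rw [add_zero]
  | succ m =>
    ext x y
    show (∑ a : Fin m → Fin N, (M + M') (Fin.snoc a x) (Fin.snoc a y)) = _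
    show _ = (∑ a : Fin m → Fin N, M (Fin.snoc a x) (Fin.snoc a y))
      + ∑ a : Fin m → Fin N, M' (Fin.snoc a x) (Fin.snoc a y)
    rw [← Finset.sum_add_distrib]
    rfl

lemma antis_comm_chainF (q : F) (Rh : RMat F N) {m k i l : ℕ} (hki : k ≤ i)
    (h : i + l + 1 ≤ m) :
    Commute (embed m (antis Rh q k)) (rChainFrom m Rh i l) := by
  induction l with
  | zero =>
    show Commute _ (1 : TensM F N m)
    exact Commute.one_right _
  | succ l IH =>
    show Commute _ (rChainFrom m Rh i l * place2 (i + l) Rh)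
    refine Commute.mul_right (IH (by omega)) ?_
    exact embed_place2_comm (by omega) (by omega) _ _ (fun p r u v => mul_comm _ _)

lemma key_identity (q : F) (Rh : RMat F N) (hq : q ≠ 0) (hω : q - q⁻¹ ≠ 0)
    (hqn : ∀ k : ℕ, 1 ≤ k → qnum q k ≠ 0) (hYB : YangBaxter Rh) (hHecke : Hecke q Rh)
    {m k : ℕ} (hk : 1 ≤ k) (hm : k + 1 ≤ m) :
    (q ^ k) • embed m (antis Rh q k)
      = qnum q (k + 1) • embed m (antis Rh q (k + 1))
        + qnum q k •
            (embed m (antis Rh q k) * place2 (k - 1) Rh * embed m (antis Rh q k)) := by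
  obtain ⟨n, rfl⟩ : ∃ n, k = n + 1 := ⟨k - 1, by omega⟩
  simp only [Nat.add_sub_cancel]
  have hκ' : qnum q (n + 2) ≠ 0 := hqn (n + 2) (by omega)
  have hidem := (pkg q Rh hq hω hqn hYB hHecke (n + 1)).2.2.2.2.1 m (by omega)
  have h1 : qnum q (n + 2) • embed m (antis Rh q (n + 2))
      = q ^ (n + 1) • embed m (antis Rh q (n + 1))
        - qnum q (n + 1) • (embed m (antis Rh q (n + 1)) * place2 n Rh *
            embed m (antis Rh q (n + 1))) := by
    rw [embed_antis_succ q Rh (by omega), smul_inv_smul₀ hκ',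
      expand_sandwich _ _ _ _ hidem]
  rw [h1, sub_add_cancel]

end finalaux

end CHN
set_option maxHeartbeats 2000000 in
open CHN in
theorem CHN_key_recursive_step {F : Type*} [Field F] {N : ℕ} (hN : 1 ≤ N) (q : F) (hq : q ≠ 0)
    (hqnum : ∀ k : ℕ, 1 ≤ k → qnum q k ≠ 0)
    (Rh : RMat F N) (hRinv : IsUnit Rh.det)
    (hYB : YangBaxter Rh) (hHecke : Hecke q Rh)
    {𝒜 : Type*} [Ring 𝒜] [Algebra F 𝒜]
    (T : Matrix (Fin N) (Fin N) 𝒜) (hT : RTTrel 𝒜 Rh T)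
    (j k : ℕ) (hj : 2 ≤ j) (hk1 : 1 ≤ k) (hkj : k ≤ j - 1) :
    sigmaT 𝒜 Rh q T k • underPow 𝒜 Rh T (j - k) =
      qnum q (k + 1) •
        trAllButLast
          (lift 𝒜 (embed j (antis Rh q (k + 1)) * rChainFrom j Rh k (j - 1 - k)) *
            Tprod j T j) +
      qnum q k •
        trAllButLast
          (lift 𝒜 (embed j (antis Rh q k) * rChainFrom j Rh (k - 1) (j - k)) *
            Tprod j T j) := by
  obtain ⟨l, rfl⟩ : ∃ l, j = k + l + 1 := ⟨j - 1 - k, by omega⟩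
  have hω := omega_ne hqnum
  rw [show k + l + 1 - k = l + 1 from by omega, show k + l + 1 - 1 - k = l from by omega]
  -- Step A: factor the trace over the two blocks of legs
  rw [show sigmaT 𝒜 Rh q T k • underPow 𝒜 Rh T (l + 1)
      = q ^ k • trAllButLast
          (win (k + l + 1) 0 k (lift 𝒜 (antis Rh q k) * Tprod k T k) *
            win (k + l + 1) k (l + 1)
              (lift 𝒜 (rChain (l + 1) Rh l) * Tprod (l + 1) T (l + 1))) from by
    rw [trace_factor]
    show (q ^ k • Matrix.trace (lift 𝒜 (antis Rh q k) * Tprod k T k)) • _ = _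
    rw [smul_assoc]
    rfl]
  -- Step B: recombine into operators on the full space
  have hcomm1 : Commute (Tprod (k + l + 1) T k) (lift 𝒜 (rChainFrom (k + l + 1) Rh k l)) :=
    Tprod_comm_chain 𝒜 Rh T le_rfl (by omega)
  have hB : win (k + l + 1) 0 k (lift 𝒜 (antis Rh q k) * Tprod k T k) *
        win (k + l + 1) k (l + 1)
          (lift 𝒜 (rChain (l + 1) Rh l) * Tprod (l + 1) T (l + 1))
      = lift 𝒜 (embed (k + l + 1) (antis Rh q k) * rChainFrom (k + l + 1) Rh k l) *
          Tprod (k + l + 1) T (k + l + 1) := by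
    have e1 : win (k + l + 1) 0 k (lift 𝒜 (antis Rh q k))
        = lift 𝒜 (embed (k + l + 1) (antis Rh q k)) := by
      rw [embed_eq_win]
      exact (win_map _ (map_zero _) _).symm
    have e3 : win (k + l + 1) k (l + 1) (rChain (l + 1) Rh l)
        = rChainFrom (k + l + 1) Rh k l :=
      win_chain Rh (by omega) (by omega)
    have e2 : win (k + l + 1) k (l + 1) (lift 𝒜 (rChain (l + 1) Rh l))
        = lift 𝒜 (rChainFrom (k + l + 1) Rh k l) := by
      rw [← e3]
      exact (win_map _ (map_zero _) _).symm
    rw [win_mul (by omega), win_mul (by omega), e1, e2,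
      win_Tprod 𝒜 (by omega) le_rfl, win_Tprod_from 𝒜 le_rfl (by omega), lift_mul]
    rw [show Tprod (k + l + 1) T (k + l + 1)
        = Tprod (k + l + 1) T k * TprodFrom 𝒜 (k + l + 1) T k (l + 1) from
      Tprod_split 𝒜 (k + l + 1) T k (l + 1)]
    rw [mul_assoc (lift 𝒜 (embed (k + l + 1) (antis Rh q k))) (Tprod (k + l + 1) T k),
      ← mul_assoc (Tprod (k + l + 1) T k) (lift 𝒜 (rChainFrom (k + l + 1) Rh k l)),
      hcomm1.eq,
      mul_assoc (lift 𝒜 (rChainFrom (k + l + 1) Rh k l)),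
      ← mul_assoc (lift 𝒜 (embed (k + l + 1) (antis Rh q k)))
        (lift 𝒜 (rChainFrom (k + l + 1) Rh k l))]
  rw [hB]
  -- Step C: apply the key recursion for the antisymmetrizer
  have hkey := key_identity q Rh hq hω hqnum hYB hHecke hk1
    (show k + 1 ≤ k + l + 1 by omega) (m := k + l + 1)
  conv_lhs => rw [← trAllButLast_smul, ← smul_mul_assoc, ← lift_smul, ← smul_mul_assoc,
    hkey, add_mul, smul_mul_assoc, smul_mul_assoc, lift_add, lift_smul, lift_smul,
    add_mul, smul_mul_assoc, smul_mul_assoc, trAllButLast_add, trAllButLast_smul,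
    trAllButLast_smul]
  congr 1
  congr 1
  -- the remaining term: use cyclicity of the partial trace and idempotency
  have hEC : Commute (embed (k + l + 1) (antis Rh q k)) (rChainFrom (k + l + 1) Rh k l) :=
    antis_comm_chainF q Rh le_rfl (by omega)
  have hidem : embed (k + l + 1) (antis Rh q k) * embed (k + l + 1) (antis Rh q k)
      = embed (k + l + 1) (antis Rh q k) :=
    (pkg q Rh hq hω hqnum hYB hHecke k).2.2.2.2.1 (k + l + 1) (by omega)
  have hcons : rChainFrom (k + l + 1) Rh (k - 1) (l + 1)
      = place2 (k - 1) Rh * rChainFrom (k + l + 1) Rh k l := by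
    rw [chain_cons, show k - 1 + 1 = k from by omega]
  have hword : embed (k + l + 1) (antis Rh q k) * place2 (k - 1) Rh *
        embed (k + l + 1) (antis Rh q k) * rChainFrom (k + l + 1) Rh k l
      = embed (k + l + 1) (antis Rh q k) * rChainFrom (k + l + 1) Rh (k - 1) (l + 1) *
          embed (k + l + 1) (antis Rh q k) := by
    rw [hcons,
      mul_assoc (embed (k + l + 1) (antis Rh q k) * place2 (k - 1) Rh)
        (embed (k + l + 1) (antis Rh q k)),
      hEC.eq,
      ← mul_assoc (embed (k + l + 1) (antis Rh q k) * place2 (k - 1) Rh)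
        (rChainFrom (k + l + 1) Rh k l),
      mul_assoc (embed (k + l + 1) (antis Rh q k)) (place2 (k - 1) Rh)]
  rw [hword, lift_mul, mul_assoc,
    (antis_comm_Tprod 𝒜 Rh T q hT le_rfl k (by omega)).eq, ← mul_assoc]
  have hembed : embed (k + l + 1) (antis Rh q k)
      = embed (k + l + 1) (embed (k + l) (antis Rh q k)) :=
    (embed_embed (by omega) (by omega) _).symm
  have hcycle : trAllButLast
        ((lift 𝒜 (embed (k + l + 1) (antis Rh q k) *
            rChainFrom (k + l + 1) Rh (k - 1) (l + 1)) * Tprod (k + l + 1) T (k + l + 1)) *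
          lift 𝒜 (embed (k + l + 1) (antis Rh q k)))
      = trAllButLast (lift 𝒜 (embed (k + l + 1) (antis Rh q k)) *
          (lift 𝒜 (embed (k + l + 1) (antis Rh q k) *
            rChainFrom (k + l + 1) Rh (k - 1) (l + 1)) * Tprod (k + l + 1) T (k + l + 1))) := by
    rw [hembed]
    exact (trAllButLast_cycle _ _).symm
  rw [hcycle, ← mul_assoc, ← lift_mul,
    ← mul_assoc (embed (k + l + 1) (antis Rh q k)) (embed (k + l + 1) (antis Rh q k)),
    hidem]
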